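/- arXiv:0912.1912 — 8 statements merged into one kernel-verified Lean document; each statement's English description precedes it below -/
import Mathlib

section
/- Let (M_n, d_n), n ∈ ℕ, be a sequence of separable complete metric spaces. Then the equivalence relation E((M_n)_{n∈ℕ}, 0) on the Polish space Π_{n∈ℕ} M_n is Borel reducible to the equivalence relation ℝ^ℕ/c₀ on ℝ^ℕ. -/
/-!
Each separable space `α` embeds coordinatewise 1-Lipschitz into `c₀(ℕ × ℕ)`, with a modulus
independent of `α`: for a dense sequence `g` and a scale `R = 2⁻ˢ`, the coordinate `(s, k)` is a
tent of height `R` around `g k`, cut down by the distance from `a` to `g 0, …, g (k-1)`. The cut-off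
makes every point land in `c₀`; a point `a` lies in the `R/2`-tent of the first `g k` that is
`R/2`-close to it, and that tent vanishes at every `b` with `2R ≤ dist a b`. Putting the
embeddings of the `M n` side by side turns `dist (x n) (y n) → 0` into convergence to `0` along
the cofinite filter of `ℕ × (ℕ × ℕ) ≃ ℕ`: the Lipschitz bound handles all but finitely many `n`,
and membership in `c₀` the remaining ones.
-/

open Filter Topology MeasureTheory
open scoped ENNReal NNReal

noncomputable section

/-- `E` is Borel reducible to `F`: there is a Borel (measurable) map `θ` such that
`E x y ↔ F (θ x) (θ y)` for all `x, y`. -/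
def BorelReducible {α β : Type*} [MeasurableSpace α] [MeasurableSpace β]
    (E : α → α → Prop) (F : β → β → Prop) : Prop :=
  ∃ θ : α → β, Measurable θ ∧ ∀ x y, E x y ↔ F (θ x) (θ y)

theorem tendsto_nhds_zero_cofinite_iff {ι : Type*} {u : ι → ℝ} (hu : ∀ i, 0 ≤ u i) :
    Tendsto u cofinite (𝓝 0) ↔ ∀ ε > 0, {i | ε ≤ u i}.Finite := by
  simp only [Metric.tendsto_nhds, eventually_cofinite, Real.dist_eq, sub_zero, abs_of_nonneg (hu _),
    not_lt]

theorem Equiv.tendsto_comp_cofinite_iff {α β γ : Type*} (e : α ≃ β) {v : β → γ} {l : Filter γ} :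
    Tendsto (v ∘ e) cofinite l ↔ Tendsto v cofinite l :=
  ⟨fun h => by simpa [Function.comp_def] using h.comp e.symm.injective.tendsto_cofinite,
    fun h => h.comp e.injective.tendsto_cofinite⟩

section TentEmbedding

variable {α : Type*} [PseudoMetricSpace α]

def infDistPrefix (g : ℕ → α) (a : α) : ℕ → ℝ
  | 0 => 1
  | k + 1 => min (infDistPrefix g a k) (dist a (g k))

theorem infDistPrefix_nonneg (g : ℕ → α) (a : α) : ∀ k, 0 ≤ infDistPrefix g a k
  | 0 => zero_le_one
  | k + 1 => le_min (infDistPrefix_nonneg g a k) dist_nonneg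

theorem infDistPrefix_le_dist (g : ℕ → α) (a : α) {m : ℕ} : ∀ {k}, m < k →
    infDistPrefix g a k ≤ dist a (g m)
  | k + 1, hm => by
    rcases Nat.lt_succ_iff_lt_or_eq.mp hm with hm | rfl
    · exact (min_le_left _ _).trans (infDistPrefix_le_dist g a hm)
    · exact min_le_right _ _

theorem le_infDistPrefix (g : ℕ → α) (a : α) {c : ℝ} (hc : c ≤ 1) :
    ∀ k, (∀ m < k, c ≤ dist a (g m)) → c ≤ infDistPrefix g a k
  | 0, _ => hc
  | k + 1, h => le_min (le_infDistPrefix g a hc k fun m hm => h m (hm.trans k.lt_succ_self))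
      (h k k.lt_succ_self)

theorem lipschitzWith_infDistPrefix (g : ℕ → α) : ∀ k, LipschitzWith 1 (infDistPrefix g · k)
  | 0 => LipschitzWith.const' 1
  | k + 1 => by
    simpa [infDistPrefix] using
      (lipschitzWith_infDistPrefix g k).min (LipschitzWith.dist_left (g k))

theorem tendsto_infDistPrefix {g : ℕ → α} (hg : DenseRange g) (a : α) :
    Tendsto (infDistPrefix g a) atTop (𝓝 0) := by
  refine tendsto_order.2 ⟨fun b hb => .of_forall fun k => hb.trans_le (infDistPrefix_nonneg g a k),
    fun η hη => ?_⟩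
  obtain ⟨m, hm⟩ := hg.exists_dist_lt a hη
  exact eventually_atTop.2 ⟨m + 1, fun k hk => (infDistPrefix_le_dist g a hk).trans_lt hm⟩

def tentCoord (R : ℝ) (g : ℕ → α) (k : ℕ) (a : α) : ℝ :=
  min (max 0 (R - dist a (g k))) (infDistPrefix g a k)

theorem tentCoord_nonneg (R : ℝ) (g : ℕ → α) (k : ℕ) (a : α) : 0 ≤ tentCoord R g k a :=
  le_min (le_max_left _ _) (infDistPrefix_nonneg g a k)

theorem tentCoord_le {R : ℝ} (hR : 0 ≤ R) (g : ℕ → α) (k : ℕ) (a : α) : tentCoord R g k a ≤ R :=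
  (min_le_left _ _).trans (max_le hR (sub_le_self R dist_nonneg))

theorem tentCoord_le_infDistPrefix (R : ℝ) (g : ℕ → α) (k : ℕ) (a : α) :
    tentCoord R g k a ≤ infDistPrefix g a k :=
  min_le_right _ _

theorem tentCoord_eq_zero {R : ℝ} {g : ℕ → α} {k : ℕ} {b : α} (h : R ≤ dist b (g k)) :
    tentCoord R g k b = 0 :=
  le_antisymm ((min_le_left _ _).trans (max_le le_rfl (sub_nonpos.2 h)))
    (tentCoord_nonneg R g k b)

theorem lipschitzWith_tentCoord (R : ℝ) (g : ℕ → α) (k : ℕ) : LipschitzWith 1 (tentCoord R g k) := by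
  have hsub : LipschitzWith 1 fun a => R - dist a (g k) := by
    simpa [Function.comp_def] using
      (IsometryEquiv.subLeft R).isometry.lipschitz.comp (LipschitzWith.dist_left (g k))
  have h := (hsub.const_max 0).min (lipschitzWith_infDistPrefix g k)
  rwa [max_self] at h

theorem exists_half_le_tentCoord {g : ℕ → α} (hg : DenseRange g) {R : ℝ} (hR₀ : 0 < R)
    (hR₁ : R ≤ 1) (a : α) : ∃ k, R / 2 ≤ tentCoord R g k a ∧ dist a (g k) < R / 2 := by
  classical
  have hex : ∃ k, dist a (g k) < R / 2 := hg.exists_dist_lt a (half_pos hR₀)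
  refine ⟨Nat.find hex, le_min (le_max_of_le_right ?_) (le_infDistPrefix g a (by linarith) _ ?_),
    Nat.find_spec hex⟩
  · linarith [Nat.find_spec hex]
  · exact fun m hm => le_of_not_gt (Nat.find_min hex hm)

theorem exists_le_abs_tentCoord_sub {g : ℕ → α} (hg : DenseRange g) {R : ℝ} (hR₀ : 0 < R)
    (hR₁ : R ≤ 1) {a b : α} (hab : 2 * R ≤ dist a b) :
    ∃ k, R / 2 ≤ |tentCoord R g k a - tentCoord R g k b| := by
  obtain ⟨k, hak, hk⟩ := exists_half_le_tentCoord hg hR₀ hR₁ a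
  have hb : R ≤ dist b (g k) := by linarith [dist_triangle_right a b (g k)]
  refine ⟨k, ?_⟩
  rwa [tentCoord_eq_zero hb, sub_zero, abs_of_nonneg (tentCoord_nonneg _ _ _ _)]

def tentEmbedding (g : ℕ → α) (a : α) (i : ℕ × ℕ) : ℝ :=
  tentCoord ((1 / 2) ^ i.1) g i.2 a

theorem tendsto_tentEmbedding {g : ℕ → α} (hg : DenseRange g) (a : α) :
    Tendsto (tentEmbedding g a) cofinite (𝓝 0) := by
  have hheight := (tendsto_nhds_zero_cofinite_iff fun s => by positivity).1
    (Nat.cofinite_eq_atTop ▸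
      tendsto_pow_atTop_nhds_zero_of_lt_one (by norm_num) (by norm_num : (1 / 2 : ℝ) < 1))
  have hprefix := (tendsto_nhds_zero_cofinite_iff (infDistPrefix_nonneg g a)).1
    (Nat.cofinite_eq_atTop ▸ tendsto_infDistPrefix hg a)
  refine (tendsto_nhds_zero_cofinite_iff fun i => tentCoord_nonneg _ _ _ _).2 fun η hη =>
    ((hheight η hη).prod (hprefix η hη)).subset ?_
  rintro ⟨s, k⟩ h
  exact ⟨h.trans (tentCoord_le (by positivity) _ _ _), h.trans (tentCoord_le_infDistPrefix _ _ _ _)⟩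

theorem exists_le_abs_tentEmbedding_sub {g : ℕ → α} (hg : DenseRange g) (a b : α) :
    ∃ i, min (dist a b) 2 / 8 ≤ |tentEmbedding g a i - tentEmbedding g b i| := by
  rcases (dist_nonneg : 0 ≤ dist a b).eq_or_lt with h | h
  · exact ⟨(0, 0), by simp [← h]⟩
  have hmin₀ : 0 < min (dist a b) 2 := lt_min h two_pos
  obtain ⟨n, hlt, hle⟩ := exists_nat_pow_near_of_lt_one (x := min (dist a b) 2 / 2)
    (by positivity) (by linarith [min_le_right (dist a b) 2]) (by norm_num : (0 : ℝ) < 1 / 2)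
    (by norm_num)
  obtain ⟨k, hk⟩ := exists_le_abs_tentCoord_sub hg (R := (1 / 2) ^ (n + 1)) (by positivity)
    (pow_le_one₀ (by norm_num) (by norm_num)) (a := a) (b := b)
    (by linarith [min_le_left (dist a b) 2])
  refine ⟨(n + 1, k), le_trans ?_ hk⟩
  rw [pow_succ]
  linarith

end TentEmbedding

theorem exists_c0_embedding (α : Type*) [PseudoMetricSpace α] [TopologicalSpace.SeparableSpace α] :
    ∃ F : α → ℕ × ℕ → ℝ, (∀ i, LipschitzWith 1 (F · i)) ∧ (∀ a, Tendsto (F a) cofinite (𝓝 0)) ∧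
      ∀ a b, ∃ i, min (dist a b) 2 / 8 ≤ |F a i - F b i| := by
  cases isEmpty_or_nonempty α with
  | inl _ => exact ⟨fun _ _ => 0, fun _ => LipschitzWith.const' 0, isEmptyElim, isEmptyElim⟩
  | inr _ =>
    have hg := TopologicalSpace.denseRange_denseSeq α
    exact ⟨tentEmbedding (TopologicalSpace.denseSeq α), fun _ => lipschitzWith_tentCoord _ _ _,
      tendsto_tentEmbedding hg, exists_le_abs_tentEmbedding_sub hg⟩

section Product

variable {κ ι : Type*} {M : κ → Type*} [∀ n, PseudoMetricSpace (M n)] {F : ∀ n, M n → ι → ℝ}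
  {x y : ∀ n, M n}

theorem tendsto_abs_sub_cofinite_of_tendsto_dist (hF : ∀ n i, LipschitzWith 1 (F n · i))
    (hF₀ : ∀ n a, Tendsto (F n a) cofinite (𝓝 0))
    (h : Tendsto (fun n => dist (x n) (y n)) cofinite (𝓝 0)) :
    Tendsto (fun p : κ × ι => |F p.1 (x p.1) p.2 - F p.1 (y p.1) p.2|) cofinite (𝓝 0) := by
  rw [tendsto_nhds_zero_cofinite_iff fun _ => abs_nonneg _]
  intro η hη
  have hfar := (tendsto_nhds_zero_cofinite_iff fun n => dist_nonneg).1 h η hη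
  have hcoord (n : κ) : {i | η ≤ |F n (x n) i - F n (y n) i|}.Finite := by
    refine (tendsto_nhds_zero_cofinite_iff fun _ => abs_nonneg _).1 ?_ η hη
    simpa using ((hF₀ n (x n)).sub (hF₀ n (y n))).abs
  refine (hfar.biUnion fun n _ => (hcoord n).image (Prod.mk n)).subset ?_
  rintro ⟨n, i⟩ hni
  have hn : η ≤ dist (x n) (y n) :=
    hni.trans (by simpa [Real.dist_eq] using (hF n i).dist_le_mul (x n) (y n))
  exact Set.mem_biUnion hn ⟨i, hni, rfl⟩

theorem tendsto_dist_of_tendsto_abs_sub_cofinite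
    (hsep : ∀ ε > 0, ∃ δ > 0, ∀ n (a b : M n), ε ≤ dist a b → ∃ i, δ ≤ |F n a i - F n b i|)
    (h : Tendsto (fun p : κ × ι => |F p.1 (x p.1) p.2 - F p.1 (y p.1) p.2|) cofinite (𝓝 0)) :
    Tendsto (fun n => dist (x n) (y n)) cofinite (𝓝 0) := by
  rw [tendsto_nhds_zero_cofinite_iff fun n => dist_nonneg]
  intro ε hε
  obtain ⟨δ, hδ, hsep⟩ := hsep ε hε
  refine (((tendsto_nhds_zero_cofinite_iff fun _ => abs_nonneg _).1 h δ hδ).image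
    Prod.fst).subset fun n hn => ?_
  obtain ⟨i, hi⟩ := hsep n _ _ hn
  exact ⟨(n, i), hi, rfl⟩

end Product

theorem E_Mn_zero_reducible_c0_general (M : ℕ → Type*) [∀ n, MetricSpace (M n)]
    [∀ n, TopologicalSpace.SeparableSpace (M n)]
    [∀ n, MeasurableSpace (M n)] [∀ n, BorelSpace (M n)] :
    BorelReducible
      (fun x y : ∀ n, M n => Tendsto (fun n => dist (x n) (y n)) atTop (𝓝 0))
      (fun x y : ℕ → ℝ => Tendsto (fun n => |x n - y n|) atTop (𝓝 0)) := by
  choose F hF hF₀ hsep using fun n => exists_c0_embedding (M n)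
  have hsep' : ∀ ε > 0, ∃ δ > 0, ∀ n (a b : M n), ε ≤ dist a b → ∃ i, δ ≤ |F n a i - F n b i| :=
    fun ε hε => ⟨min ε 2 / 8, by positivity, fun n a b hab =>
      (hsep n a b).imp fun i => le_trans (by gcongr)⟩
  let e : ℕ ≃ ℕ × ℕ × ℕ := (Denumerable.eqv _).symm
  refine ⟨fun x j => F (e j).1 (x (e j).1) (e j).2, ?_, fun x y => ?_⟩
  · exact measurable_pi_lambda _ fun j => (hF _ _).continuous.measurable.comp (measurable_pi_apply _)
  · simp only [← Nat.cofinite_eq_atTop]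
    exact (Iff.intro (tendsto_abs_sub_cofinite_of_tendsto_dist hF hF₀)
      (tendsto_dist_of_tendsto_abs_sub_cofinite hsep')).trans e.tendsto_comp_cofinite_iff.symm

theorem E_Mn_zero_reducible_c0 (M : ℕ → Type*) [∀ n, MetricSpace (M n)]
    [∀ n, TopologicalSpace.SeparableSpace (M n)] [∀ n, CompleteSpace (M n)]
    [∀ n, MeasurableSpace (M n)] [∀ n, BorelSpace (M n)] :
    BorelReducible
      (fun x y : ∀ n, M n => Tendsto (fun n => dist (x n) (y n)) atTop (𝓝 0))
      (fun x y : ℕ → ℝ => Tendsto (fun n => |x n - y n|) atTop (𝓝 0)) :=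
  E_Mn_zero_reducible_c0_general M

end
end

section
/- Let (M_n, d_n), n ∈ ℕ, be a sequence of separable complete metric spaces. Then E((M_n)_{n∈ℕ}, 0) is Borel reducible to E([0,1], 0), the equivalence relation on [0,1]^ℕ defined by (x,y) ∈ E([0,1],0) iff lim_{n→∞}|x(n)−y(n)| = 0. -/
open Filter Topology MeasureTheory
open scoped ENNReal NNReal

noncomputable section

/-!
Fix dense sequences `p n` in the factors `M n`. A point `x` is sent to the family of probes
indexed by `(n, m, j) ∈ ℕ³`: the tent of height `2⁻¹ ^ m` around `p n j`, evaluated at `x n` and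
capped by the distances from `x n` to `p n 0, …, p n (j - 1)`. Each probe is 1-Lipschitz and
bounded by its height, and by density the cap makes the probes at a fixed point tend to `0` in
`j`; hence if `dist (x n) (y n) → 0`, the differences of the probes at `x` and `y` tend to `0`
along the cofinite filter of `ℕ³`. Conversely, if `ε ≤ dist (x n) (y n)` and `2 * 2⁻¹ ^ m ≤ ε`,
the probe at the first `p n j` within `2⁻¹ ^ m / 2` of `x n` is at least `2⁻¹ ^ m / 2` at `x`
and vanishes at `y`. The probes are continuous with values in `[0, 1]`, so enumerating `ℕ³` by
`ℕ` gives the reduction.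
-/

def prefixMin (f : ℕ → ℝ) : ℕ → ℝ
  | 0 => 1
  | j + 1 => min (prefixMin f j) (f j)

section prefixMin

variable {f g : ℕ → ℝ}

lemma prefixMin_nonneg (hf : ∀ i, 0 ≤ f i) : ∀ j, 0 ≤ prefixMin f j
  | 0 => zero_le_one
  | j + 1 => le_min (prefixMin_nonneg hf j) (hf j)

lemma prefixMin_le_one : ∀ j, prefixMin f j ≤ 1
  | 0 => le_rfl
  | j + 1 => (min_le_left _ _).trans (prefixMin_le_one j)

lemma prefixMin_le_of_lt {i j : ℕ} (hij : i < j) : prefixMin f j ≤ f i := by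
  induction j with
  | zero => omega
  | succ j ih =>
    rcases Nat.lt_succ_iff_lt_or_eq.mp hij with hij | rfl
    · exact (min_le_left _ _).trans (ih hij)
    · exact min_le_right _ _

lemma le_prefixMin {c : ℝ} (hc : c ≤ 1) : ∀ j, (∀ i < j, c ≤ f i) → c ≤ prefixMin f j
  | 0, _ => hc
  | j + 1, h => le_min (le_prefixMin hc j fun i hi => h i (hi.trans j.lt_succ_self))
      (h j j.lt_succ_self)

lemma tendsto_prefixMin_zero (hf : ∀ i, 0 ≤ f i) (hsmall : ∀ δ > 0, ∃ i, f i < δ) :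
    Tendsto (prefixMin f) atTop (𝓝 0) := by
  refine tendsto_order.2 ⟨fun a ha => .of_forall fun j => ha.trans_le (prefixMin_nonneg hf j),
    fun ε hε => ?_⟩
  obtain ⟨i, hi⟩ := hsmall ε hε
  exact eventually_atTop.2 ⟨i + 1, fun j hj => (prefixMin_le_of_lt hj).trans_lt hi⟩

lemma abs_prefixMin_sub_le {L : ℝ} (hL : 0 ≤ L) (h : ∀ i, |f i - g i| ≤ L) :
    ∀ j, |prefixMin f j - prefixMin g j| ≤ L
  | 0 => by simpa only [prefixMin, sub_self, abs_zero] using hL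
  | j + 1 => (abs_min_sub_min_le_max _ _ _ _).trans (max_le (abs_prefixMin_sub_le hL h j) (h j))

lemma continuous_prefixMin {α : Type*} [TopologicalSpace α] {f : ℕ → α → ℝ}
    (hf : ∀ i, Continuous (f i)) : ∀ j, Continuous fun a => prefixMin (fun i => f i a) j
  | 0 => continuous_const
  | j + 1 => (continuous_prefixMin hf j).min (hf j)

end prefixMin

section probe

variable {X : Type*} [PseudoMetricSpace X] (p : ℕ → X) (r : ℝ) (j : ℕ)

def probe (x : X) : ℝ :=
  min (max (r - dist x (p j)) 0) (prefixMin (fun i => dist x (p i)) j)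

variable {p r j}

lemma probe_nonneg (x : X) : 0 ≤ probe p r j x :=
  le_min (le_max_right _ _) (prefixMin_nonneg (fun _ => dist_nonneg) j)

lemma probe_le_one (x : X) : probe p r j x ≤ 1 :=
  (min_le_right _ _).trans (prefixMin_le_one j)

lemma probe_le (hr : 0 ≤ r) (x : X) : probe p r j x ≤ r :=
  (min_le_left _ _).trans (max_le (sub_le_self r dist_nonneg) hr)

lemma abs_probe_sub_probe_le_dist (x y : X) : |probe p r j x - probe p r j y| ≤ dist x y := by
  have hdist : ∀ i, |dist x (p i) - dist y (p i)| ≤ dist x y := fun i => abs_dist_sub_le _ _ _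
  refine (abs_min_sub_min_le_max _ _ _ _).trans
    (max_le ?_ (abs_prefixMin_sub_le dist_nonneg hdist j))
  refine (abs_max_sub_max_le_abs _ _ _).trans ?_
  rw [sub_sub_sub_cancel_left, abs_sub_comm]
  exact hdist j

lemma abs_probe_sub_probe_le (hr : 0 ≤ r) (x y : X) : |probe p r j x - probe p r j y| ≤ r :=
  abs_sub_le_of_nonneg_of_le (probe_nonneg x) (probe_le hr x) (probe_nonneg y) (probe_le hr y)

lemma continuous_probe : Continuous (probe p r j) :=
  (continuous_const.sub (continuous_id.dist continuous_const)).max continuous_const |>.min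
    (continuous_prefixMin (fun _ => continuous_id.dist continuous_const) j)

lemma tendsto_probe_atTop (hp : DenseRange p) (x : X) :
    Tendsto (fun j => probe p r j x) atTop (𝓝 0) :=
  squeeze_zero (fun _ => probe_nonneg x) (fun _ => min_le_right _ _)
    (tendsto_prefixMin_zero (fun _ => dist_nonneg) (Metric.denseRange_iff.1 hp x))

lemma tendsto_abs_probe_sub_probe (hp : DenseRange p) (x y : X) :
    Tendsto (fun j => |probe p r j x - probe p r j y|) atTop (𝓝 0) := by
  simpa only [sub_zero, abs_zero] using
    ((tendsto_probe_atTop hp x).sub (tendsto_probe_atTop hp y)).abs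

lemma exists_le_abs_probe_sub_probe (hp : DenseRange p) (hr : 0 < r) (hr₁ : r ≤ 2) {x y : X}
    (hxy : 2 * r ≤ dist x y) : ∃ j, r / 2 ≤ |probe p r j x - probe p r j y| := by
  classical
  have hnear : ∃ j, dist x (p j) < r / 2 := Metric.denseRange_iff.1 hp x _ (half_pos hr)
  set j := Nat.find hnear
  have hx : r / 2 ≤ probe p r j x := by
    refine le_min (le_max_of_le_left ?_) (le_prefixMin (by linarith) j fun i hi => ?_)
    · linarith [Nat.find_spec hnear]
    · exact not_lt.1 (Nat.find_min hnear hi)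
  have hy : probe p r j y = 0 := by
    have hfar : r ≤ dist y (p j) := by
      linarith [dist_triangle_right x y (p j), Nat.find_spec hnear]
    exact le_antisymm ((min_le_left _ _).trans (max_le (by linarith) le_rfl)) (probe_nonneg y)
  exact ⟨j, by rwa [hy, sub_zero, abs_of_nonneg (probe_nonneg x)]⟩

end probe

lemma tendsto_cofinite_of_bounds {g : ℕ × ℕ × ℕ → ℝ} {a b : ℕ → ℝ} (hg : ∀ t, 0 ≤ g t)
    (ha : Tendsto a atTop (𝓝 0)) (hb : Tendsto b atTop (𝓝 0))
    (hga : ∀ t, g t ≤ a t.1) (hgb : ∀ t, g t ≤ b t.2.1)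
    (hgc : ∀ n m, Tendsto (fun j => g (n, m, j)) atTop (𝓝 0)) :
    Tendsto g cofinite (𝓝 0) := by
  refine tendsto_order.2 ⟨fun c hc => .of_forall fun t => hc.trans_le (hg t), fun ε hε => ?_⟩
  obtain ⟨N, hN⟩ := eventually_atTop.1 (ha.eventually (gt_mem_nhds hε))
  obtain ⟨K, hK⟩ := eventually_atTop.1 (hb.eventually (gt_mem_nhds hε))
  have hfin : (Set.Iio N ×ˢ Set.Iio K).Finite := (Set.finite_Iio N).prod (Set.finite_Iio K)
  obtain ⟨J, hJ⟩ := eventually_atTop.1 <| (eventually_all_finite hfin).2 fun nm _ =>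
    (hgc nm.1 nm.2).eventually (gt_mem_nhds hε)
  refine eventually_cofinite.2 <| ((Set.finite_Iio N).prod (Set.finite_Iio K |>.prod
    (Set.finite_Iio J))).subset ?_
  rintro ⟨n, m, j⟩ (hε_le : ¬ g (n, m, j) < ε)
  have hn : n < N := not_le.1 fun h => hε_le ((hga _).trans_lt (hN n h))
  have hm : m < K := not_le.1 fun h => hε_le ((hgb _).trans_lt (hK m h))
  exact ⟨hn, hm, not_le.1 fun h => hε_le (hJ j h (n, m) ⟨hn, hm⟩)⟩

lemma tendsto_of_exists_le_fiber {ι : Type*} {d : ℕ → ℝ} {g : ℕ × ι → ℝ} (hd : ∀ n, 0 ≤ d n)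
    (hg : Tendsto g cofinite (𝓝 0))
    (hfiber : ∀ ε > 0, ∃ δ > 0, ∀ n, ε ≤ d n → ∃ i, δ ≤ g (n, i)) :
    Tendsto d atTop (𝓝 0) := by
  rw [← Nat.cofinite_eq_atTop]
  refine tendsto_order.2 ⟨fun c hc => .of_forall fun n => hc.trans_le (hd n), fun ε hε => ?_⟩
  obtain ⟨δ, hδ, hlarge⟩ := hfiber ε hε
  refine eventually_cofinite.2 <| ((eventually_cofinite.1 (hg.eventually (gt_mem_nhds hδ))).image
    Prod.fst).subset fun n hn => ?_
  obtain ⟨i, hi⟩ := hlarge n (not_lt.1 hn)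
  exact ⟨(n, i), not_lt.2 hi, rfl⟩

section probeEmbedding

variable {M : ℕ → Type*} [∀ n, PseudoMetricSpace (M n)] (p : ∀ n, ℕ → M n)

def probeEmbedding (x : ∀ n, M n) (t : ℕ × ℕ × ℕ) : ℝ :=
  probe (p t.1) (2⁻¹ ^ t.2.1) t.2.2 (x t.1)

variable {p}

lemma probeEmbedding_mem_Icc (x : ∀ n, M n) (t : ℕ × ℕ × ℕ) :
    probeEmbedding p x t ∈ Set.Icc 0 1 :=
  ⟨probe_nonneg _, probe_le_one _⟩

lemma continuous_probeEmbedding_apply (t : ℕ × ℕ × ℕ) :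
    Continuous fun x : ∀ n, M n => probeEmbedding p x t :=
  continuous_probe.comp (continuous_apply t.1)

theorem tendsto_dist_iff_tendsto_probeEmbedding (hp : ∀ n, DenseRange (p n)) (x y : ∀ n, M n) :
    Tendsto (fun n => dist (x n) (y n)) atTop (𝓝 0) ↔
      Tendsto (fun t => |probeEmbedding p x t - probeEmbedding p y t|) cofinite (𝓝 0) := by
  have hscale : Tendsto (fun m : ℕ => (2⁻¹ : ℝ) ^ m) atTop (𝓝 0) :=
    tendsto_pow_atTop_nhds_zero_of_lt_one (by norm_num) (by norm_num)
  constructor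
  · refine fun hxy => tendsto_cofinite_of_bounds (fun _ => abs_nonneg _) hxy hscale
      (fun t => abs_probe_sub_probe_le_dist (x t.1) (y t.1))
      (fun t => abs_probe_sub_probe_le (by positivity) (x t.1) (y t.1)) fun n m => ?_
    exact tendsto_abs_probe_sub_probe (r := 2⁻¹ ^ m) (hp n) (x n) (y n)
  · refine fun h => tendsto_of_exists_le_fiber (fun _ => dist_nonneg) h fun ε hε => ?_
    obtain ⟨m, hm⟩ := exists_pow_lt_of_lt_one (half_pos hε) (by norm_num : (2⁻¹ : ℝ) < 1)
    refine ⟨2⁻¹ ^ m / 2, by positivity, fun n hn => ?_⟩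
    obtain ⟨j, hj⟩ := exists_le_abs_probe_sub_probe (r := 2⁻¹ ^ m) (hp n) (by positivity)
      ((pow_le_one₀ (by norm_num) (by norm_num)).trans one_le_two) (x := x n) (y := y n)
      (by linarith)
    exact ⟨(m, j), hj⟩

end probeEmbedding

theorem E_Mn_zero_reducible_E_unitInterval_zero_general (M : ℕ → Type*) [∀ n, MetricSpace (M n)]
    [∀ n, TopologicalSpace.SeparableSpace (M n)]
    [∀ n, MeasurableSpace (M n)] [∀ n, BorelSpace (M n)] :
    BorelReducible
      (fun x y : ∀ n, M n => Tendsto (fun n => dist (x n) (y n)) atTop (𝓝 0))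
      (fun x y : ℕ → (Set.Icc (0:ℝ) 1) =>
        Tendsto (fun n => |(x n : ℝ) - (y n : ℝ)|) atTop (𝓝 0)) := by
  rcases isEmpty_or_nonempty (∀ n, M n) with _ | ⟨⟨x₀⟩⟩
  · exact ⟨isEmptyElim, Subsingleton.measurable, isEmptyElim⟩
  have (n : ℕ) : Nonempty (M n) := ⟨x₀ n⟩
  choose p hp using fun n => TopologicalSpace.exists_dense_seq (M n)
  let e : ℕ ≃ ℕ × ℕ × ℕ := (Denumerable.eqv _).symm
  have he : map e cofinite = cofinite :=
    e.injective.tendsto_cofinite.antisymm e.surjective.le_map_cofinite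
  refine ⟨fun x k => ⟨probeEmbedding p x (e k), probeEmbedding_mem_Icc x (e k)⟩, ?_, fun x y => ?_⟩
  · exact (continuous_pi fun k =>
      (continuous_probeEmbedding_apply (e k)).subtype_mk _).measurable
  · dsimp only
    rw [tendsto_dist_iff_tendsto_probeEmbedding hp, ← he, ← Nat.cofinite_eq_atTop,
      tendsto_map'_iff]
    rfl

theorem E_Mn_zero_reducible_E_unitInterval_zero (M : ℕ → Type*) [∀ n, MetricSpace (M n)]
    [∀ n, TopologicalSpace.SeparableSpace (M n)] [∀ n, CompleteSpace (M n)]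
    [∀ n, MeasurableSpace (M n)] [∀ n, BorelSpace (M n)] :
    BorelReducible
      (fun x y : ∀ n, M n => Tendsto (fun n => dist (x n) (y n)) atTop (𝓝 0))
      (fun x y : ℕ → (Set.Icc (0:ℝ) 1) =>
        Tendsto (fun n => |(x n : ℝ) - (y n : ℝ)|) atTop (𝓝 0)) :=
  E_Mn_zero_reducible_E_unitInterval_zero_general M
end
end

section
/- Let X be a separable Banach space, p,q ∈ [1,+∞), and let (M_n,d_n), n ∈ ℕ, be a sequence of separable complete metric spaces. Suppose there are constants A,C,D > 0, a sequence of Borel maps T_n : M_n → ℓ_q(X), and sequences of nonnegative reals (ε_n), (δ_n) such that: (1) Σ_{n∈ℕ} ε_n^p < +∞ and Σ_{n∈ℕ} δ_n^q < +∞; (2) for all u,v ∈ M_n, d_n(u,v) < ε_n implies ‖T_n(u)−T_n(v)‖_{X,q} < δ_n; (3) d_n(u,v) > C implies ‖T_n(u)−T_n(v)‖_{X,q} > D; (4) ε_n ≤ d_n(u,v) ≤ C implies (1/A)·d_n(u,v)^{p/q} ≤ ‖T_n(u)−T_n(v)‖_{X,q} ≤ A·d_n(u,v)^{p/q}. Then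 E((M_n)_{n∈ℕ}, p) is Borel reducible to E(X,q). -/
open Filter Topology MeasureTheory
open scoped ENNReal NNReal

noncomputable section

/-- Borel measurable structure on `ℓ_q(X)` coming from the norm topology. -/
noncomputable instance {E : ℕ → Type*} [∀ i, NormedAddCommGroup (E i)] (p : ℝ≥0∞)
    [Fact (1 ≤ p)] : MeasurableSpace (lp E p) := borel _
instance {E : ℕ → Type*} [∀ i, NormedAddCommGroup (E i)] (p : ℝ≥0∞)
    [Fact (1 ≤ p)] : BorelSpace (lp E p) := ⟨rfl⟩

theorem E_Mn_p_reducible_EXq {X : Type*} [NormedAddCommGroup X] [NormedSpace ℝ X]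
    [CompleteSpace X] [TopologicalSpace.SeparableSpace X] [MeasurableSpace X] [BorelSpace X]
    (p q : ℝ) (hp : 1 ≤ p) (hq : 1 ≤ q) [Fact (1 ≤ ENNReal.ofReal q)]
    (M : ℕ → Type*) [∀ n, MetricSpace (M n)] [∀ n, TopologicalSpace.SeparableSpace (M n)]
    [∀ n, CompleteSpace (M n)] [∀ n, MeasurableSpace (M n)] [∀ n, BorelSpace (M n)]
    (A C D : ℝ) (hA : 0 < A) (hC : 0 < C) (hD : 0 < D)
    (T : ∀ n, M n → lp (fun _ : ℕ => X) (ENNReal.ofReal q))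
    (hT : ∀ n, Measurable (T n))
    (ε δ : ℕ → ℝ) (hε : ∀ n, 0 ≤ ε n) (hδ : ∀ n, 0 ≤ δ n)
    (h1 : Summable fun n => ε n ^ p) (h1' : Summable fun n => δ n ^ q)
    (h2 : ∀ n, ∀ u v : M n, dist u v < ε n → ‖T n u - T n v‖ < δ n)
    (h3 : ∀ n, ∀ u v : M n, dist u v > C → ‖T n u - T n v‖ > D)
    (h4 : ∀ n, ∀ u v : M n, ε n ≤ dist u v → dist u v ≤ C →
      (1/A) * dist u v ^ (p/q) ≤ ‖T n u - T n v‖ ∧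
        ‖T n u - T n v‖ ≤ A * dist u v ^ (p/q)) :
    BorelReducible
      (fun x y : ∀ n, M n => Summable fun n => dist (x n) (y n) ^ p)
      (fun x y : ℕ → X => Summable fun n => ‖x n - y n‖ ^ q) := by
  have hp0 : (0:ℝ) < p := lt_of_lt_of_le one_pos hp
  have hq0 : (0:ℝ) < q := lt_of_lt_of_le one_pos hq
  have hQtop : (ENNReal.ofReal q).toReal = q := ENNReal.toReal_ofReal hq0.le
  have hQpos : 0 < (ENNReal.ofReal q).toReal := by rw [hQtop]; exact hq0
  have hQne : (ENNReal.ofReal q) ≠ 0 := by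
    simp only [Ne, ENNReal.ofReal_eq_zero, not_le]; exact hq0
  -- key equivalence
  have key : ∀ x y : ∀ n, M n,
      (Summable fun n => dist (x n) (y n) ^ p) ↔
        Summable fun n => ‖T n (x n) - T n (y n)‖ ^ q := by
    intro x y
    set a : ℕ → ℝ := fun n => dist (x n) (y n) with ha
    set b : ℕ → ℝ := fun n => ‖T n (x n) - T n (y n)‖ with hb
    have ha0 : ∀ n, 0 ≤ a n := fun n => dist_nonneg
    have hb0 : ∀ n, 0 ≤ b n := fun n => norm_nonneg _
    constructor
    · intro hsum
      have ht : Tendsto (fun n => a n ^ p) atTop (𝓝 0) := hsum.tendsto_atTop_zero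
      have hev : ∀ᶠ n in atTop, a n ≤ C := by
        filter_upwards [ht.eventually (gt_mem_nhds (Real.rpow_pos_of_pos hC p))] with n hn
        by_contra h
        push_neg at h
        exact absurd hn (not_lt.2 (Real.rpow_le_rpow hC.le h.le hp0.le))
      obtain ⟨N, hN⟩ := eventually_atTop.1 hev
      rw [← summable_nat_add_iff N]
      refine Summable.of_nonneg_of_le (fun n => Real.rpow_nonneg (hb0 _) q)
        (fun n => ?_)
        (((summable_nat_add_iff N).2 h1').add (((summable_nat_add_iff N).2 hsum).mul_left (A ^ q)))
      have hc : a (n + N) ≤ C := hN _ (Nat.le_add_left N n)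
      by_cases hlt : a (n + N) < ε (n + N)
      · have h2' := h2 (n + N) (x _) (y _) hlt
        refine le_add_of_nonneg_of_le (mul_nonneg (Real.rpow_nonneg hA.le q)
          (Real.rpow_nonneg (ha0 _) p)) ?_ |>.trans_eq (add_comm _ _)
        exact Real.rpow_le_rpow (hb0 _) h2'.le hq0.le
      · push_neg at hlt
        have h4' := (h4 (n + N) (x _) (y _) hlt hc).2
        have : b (n + N) ^ q ≤ (A * a (n + N) ^ (p / q)) ^ q :=
          Real.rpow_le_rpow (hb0 _) h4' hq0.le
        refine le_add_of_nonneg_of_le (Real.rpow_nonneg (hδ _) q) (this.trans_eq ?_)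
        rw [Real.mul_rpow hA.le (Real.rpow_nonneg (ha0 _) _),
          ← Real.rpow_mul (ha0 _), div_mul_cancel₀ p hq0.ne']
    · intro hsum
      have ht : Tendsto (fun n => b n ^ q) atTop (𝓝 0) := hsum.tendsto_atTop_zero
      have hev : ∀ᶠ n in atTop, b n ≤ D := by
        filter_upwards [ht.eventually (gt_mem_nhds (Real.rpow_pos_of_pos hD q))] with n hn
        by_contra h
        push_neg at h
        exact absurd hn (not_lt.2 (Real.rpow_le_rpow hD.le h.le hq0.le))
      obtain ⟨N, hN⟩ := eventually_atTop.1 hev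
      rw [← summable_nat_add_iff N]
      refine Summable.of_nonneg_of_le (fun n => Real.rpow_nonneg (ha0 _) p)
        (fun n => ?_)
        (((summable_nat_add_iff N).2 h1).add (((summable_nat_add_iff N).2 hsum).mul_left (A ^ q)))
      have hc : a (n + N) ≤ C := by
        by_contra h
        push_neg at h
        exact absurd (hN _ (Nat.le_add_left N n)) (not_le.2 (h3 (n + N) (x _) (y _) h))
      by_cases hlt : a (n + N) < ε (n + N)
      · refine le_add_of_nonneg_of_le (mul_nonneg (Real.rpow_nonneg hA.le q)
          (Real.rpow_nonneg (hb0 _) q)) ?_ |>.trans_eq (add_comm _ _)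
        exact Real.rpow_le_rpow (ha0 _) hlt.le hp0.le
      · push_neg at hlt
        have h4' := (h4 (n + N) (x _) (y _) hlt hc).1
        have hab : a (n + N) ^ (p / q) ≤ A * b (n + N) := by
          have := mul_le_mul_of_nonneg_left h4' hA.le
          rwa [← mul_assoc, mul_one_div, div_self hA.ne', one_mul] at this
        have : a (n + N) ^ p ≤ (A * b (n + N)) ^ q := by
          have h' : (a (n + N) ^ (p / q)) ^ q ≤ (A * b (n + N)) ^ q :=
            Real.rpow_le_rpow (Real.rpow_nonneg (ha0 _) _) hab hq0.le
          rwa [← Real.rpow_mul (ha0 _), div_mul_cancel₀ p hq0.ne'] at h'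
        refine le_add_of_nonneg_of_le (Real.rpow_nonneg (hε _) p) (this.trans_eq ?_)
        exact Real.mul_rpow hA.le (hb0 _)
  -- the reduction map
  let e : ℕ ≃ ℕ × ℕ := (Denumerable.eqv (ℕ × ℕ)).symm
  refine ⟨fun x k => T (e k).1 (x (e k).1) (e k).2, ?_, ?_⟩
  · refine measurable_pi_lambda _ fun k => ?_
    have hev : Measurable fun f : lp (fun _ : ℕ => X) (ENNReal.ofReal q) => f (e k).2 := by
      have : LipschitzWith 1 fun f : lp (fun _ : ℕ => X) (ENNReal.ofReal q) => f (e k).2 := by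
        refine LipschitzWith.of_dist_le_mul fun f g => ?_
        rw [NNReal.coe_one, one_mul, dist_eq_norm, dist_eq_norm]
        have := lp.norm_apply_le_norm hQne (f - g) (e k).2
        rwa [lp.coeFn_sub, Pi.sub_apply] at this
      exact this.continuous.measurable
    exact hev.comp ((hT (e k).1).comp (measurable_pi_apply (e k).1))
  · intro x y
    simp only []
    rw [key x y]
    have hcoe : ∀ k, T (e k).1 (x (e k).1) (e k).2 - T (e k).1 (y (e k).1) (e k).2
        = (T (e k).1 (x (e k).1) - T (e k).1 (y (e k).1)) (e k).2 := by
      intro k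
      rw [lp.coeFn_sub, Pi.sub_apply]
    have heq : (fun k => ‖T (e k).1 (x (e k).1) (e k).2 - T (e k).1 (y (e k).1) (e k).2‖ ^ q)
        = (fun nm : ℕ × ℕ => ‖(T nm.1 (x nm.1) - T nm.1 (y nm.1)) nm.2‖ ^ q) ∘ e := by
      funext k
      simp only [Function.comp_apply, hcoe k]
    have hfib : ∀ n, Summable fun m => ‖(T n (x n) - T n (y n)) m‖ ^ q := by
      intro n
      have := (lp.memℓp (T n (x n) - T n (y n))).summable hQpos
      rwa [hQtop] at this
    have hnorm : ∀ n, ∑' m, ‖(T n (x n) - T n (y n)) m‖ ^ q = ‖T n (x n) - T n (y n)‖ ^ q := by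
      intro n
      have := lp.norm_rpow_eq_tsum hQpos (T n (x n) - T n (y n))
      rw [hQtop] at this
      exact this.symm
    constructor
    · intro hs
      rw [heq, e.summable_iff]
      rw [summable_prod_of_nonneg (fun nm => Real.rpow_nonneg (norm_nonneg _) q)]
      refine ⟨hfib, ?_⟩
      simpa only [hnorm] using hs
    · intro hs
      rw [heq, e.summable_iff,
        summable_prod_of_nonneg (fun nm => Real.rpow_nonneg (norm_nonneg _) q)] at hs
      simpa only [hnorm] using hs.2
end
end

section
/- Let X be a separable Banach space, (M,d) a separable complete metric space, and p,q ∈ [1,+∞). If M Hölder(p/q) embeds into ℓ_q(X), then E(M,p) is Borel reducible to E(X,q). -/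
/-!
Fix a Hölder embedding `T : M → ℓ_q(X)` and a bijection `e : ℕ ≃ ℕ × ℕ`, and send `x : ℕ → M` to
the sequence whose `m`-th term is the `(e m).2`-th coordinate of `T (x (e m).1)`. Since
`‖T u - T v‖^q` is comparable to `d(u, v)^p`, summability of `d(x n, y n)^p` is summability of
`‖T (x n) - T (y n)‖^q`, i.e. of the double series of `q`-th powers of coordinate differences,
which `e` flattens into the defining series of `E(X, q)`. The map is continuous, hence Borel.
-/

open Filter Topology MeasureTheory
open scoped ENNReal NNReal

noncomputable section

theorem continuous_of_dist_le_mul_rpow {X Y : Type*} [PseudoMetricSpace X] [PseudoMetricSpace Y]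
    {f : X → Y} {C r : ℝ} (hr : 0 < r) (hf : ∀ x y, dist (f x) (f y) ≤ C * dist x y ^ r) :
    Continuous f := by
  refine continuous_iff_continuousAt.2 fun y => tendsto_iff_dist_tendsto_zero.2 ?_
  refine squeeze_zero (fun _ => dist_nonneg) (fun x => hf x y) ?_
  have hdist : Tendsto (fun x => dist x y) (𝓝 y) (𝓝 0) :=
    (continuous_id.dist continuous_const).tendsto' y 0 (dist_self y)
  simpa [Real.zero_rpow hr.ne'] using (hdist.rpow_const (Or.inr hr.le)).const_mul C

theorem summable_rpow_of_le_mul {ι : Type*} {a b : ι → ℝ} {C q : ℝ} (hq : 0 ≤ q) (hC : 0 ≤ C)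
    (ha : ∀ i, 0 ≤ a i) (hb : ∀ i, 0 ≤ b i) (hba : ∀ i, b i ≤ C * a i)
    (hsum : Summable fun i => a i ^ q) : Summable fun i => b i ^ q :=
  (hsum.mul_left (C ^ q)).of_nonneg_of_le (fun i => Real.rpow_nonneg (hb i) q) fun i =>
    (Real.rpow_le_rpow (hb i) (hba i) hq).trans_eq (Real.mul_rpow hC (ha i))

theorem summable_dist_rpow_iff_of_holder {M N ι : Type*} [PseudoMetricSpace M]
    [PseudoMetricSpace N] {T : M → N} {A p q : ℝ} (hA : 0 < A) (hq : 0 < q)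
    (hT : ∀ u v, (1 / A) * dist u v ^ (p / q) ≤ dist (T u) (T v) ∧
      dist (T u) (T v) ≤ A * dist u v ^ (p / q)) (x y : ι → M) :
    (Summable fun n => dist (x n) (y n) ^ p) ↔
      Summable fun n => dist (T (x n)) (T (y n)) ^ q := by
  have hpow : ∀ u v : M, (dist u v ^ (p / q)) ^ q = dist u v ^ p := fun u v => by
    rw [← Real.rpow_mul dist_nonneg, div_mul_cancel₀ _ hq.ne']
  simp only [← hpow]
  constructor
  · exact summable_rpow_of_le_mul hq.le hA.le (fun _ => by positivity) (fun _ => dist_nonneg)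
      fun n => (hT _ _).2
  · exact summable_rpow_of_le_mul hq.le hA.le (fun _ => dist_nonneg) (fun _ => by positivity)
      fun n => (inv_mul_le_iff₀ hA).1 (one_div A ▸ (hT _ _).1)

namespace lp

variable {α : Type*} {E : α → Type*} [∀ a, NormedAddCommGroup (E a)] {p : ℝ≥0∞}

theorem summable_prod_norm_rpow_iff {ι : Type*} (hp : 0 < p.toReal) (f : ι → lp E p) :
    (Summable fun ia : ι × α => ‖f ia.1 ia.2‖ ^ p.toReal) ↔
      Summable fun i => ‖f i‖ ^ p.toReal := by
  rw [summable_prod_of_nonneg fun _ => by positivity]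
  simp only [fun i => (hasSum_norm hp (f i)).tsum_eq, fun i => (hasSum_norm hp (f i)).summable,
    implies_true, true_and]

theorem measurable_reindex {M X ι κ : Type*} [TopologicalSpace M] [MeasurableSpace M]
    [OpensMeasurableSpace M] [NormedAddCommGroup X] [MeasurableSpace X] [BorelSpace X]
    [Fact (1 ≤ p)] {T : M → lp (fun _ : α => X) p} (hT : Continuous T) (σ : κ → ι × α) :
    Measurable fun (x : ι → M) (m : κ) => T (x (σ m).1) (σ m).2 :=
  measurable_pi_lambda _ fun m =>
    (((continuous_apply (σ m).2).comp (uniformContinuous_coe.continuous.comp hT)).measurable).comp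
      (measurable_pi_apply _)

end lp

theorem EMp_reducible_EXq_of_holderEmb_general {X : Type*} [NormedAddCommGroup X]
    [MeasurableSpace X] [BorelSpace X]
    (M : Type*) [MetricSpace M]
    [MeasurableSpace M] [BorelSpace M]
    (p q : ℝ) (hp : 1 ≤ p) (hq : 1 ≤ q)
    (hemb : ∃ (T : M → lp (fun _ : ℕ => X) (ENNReal.ofReal q)) (A : ℝ), 0 < A ∧
      ∀ u v : M, (1/A) * dist u v ^ (p/q) ≤ ‖T u - T v‖ ∧
        ‖T u - T v‖ ≤ A * dist u v ^ (p/q)) :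
    BorelReducible
      (fun x y : ℕ → M => Summable fun n => dist (x n) (y n) ^ p)
      (fun x y : ℕ → X => Summable fun n => ‖x n - y n‖ ^ q) := by
  obtain ⟨T, A, hA, hT⟩ := hemb
  have hq0 : 0 < q := one_pos.trans_le hq
  have hqr : (ENNReal.ofReal q).toReal = q := ENNReal.toReal_ofReal hq0.le
  have : Fact (1 ≤ ENNReal.ofReal q) := ⟨ENNReal.one_le_ofReal.2 hq⟩
  simp only [← dist_eq_norm] at hT
  have hTcont : Continuous T :=
    continuous_of_dist_le_mul_rpow (div_pos (one_pos.trans_le hp) hq0) fun u v => (hT u v).2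
  let e : ℕ ≃ ℕ × ℕ := (Denumerable.eqv (ℕ × ℕ)).symm
  refine ⟨fun x m => T (x (e m).1) (e m).2, lp.measurable_reindex hTcont e, fun x y => ?_⟩
  calc (Summable fun n => dist (x n) (y n) ^ p)
      ↔ Summable fun n => ‖T (x n) - T (y n)‖ ^ q := by
        simpa only [dist_eq_norm] using summable_dist_rpow_iff_of_holder hA hq0 hT x y
    _ ↔ Summable fun nk : ℕ × ℕ => ‖(T (x nk.1) - T (y nk.1)) nk.2‖ ^ q := by
        have := lp.summable_prod_norm_rpow_iff (by rwa [hqr]) fun n => T (x n) - T (y n)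
        rw [hqr] at this
        exact this.symm
    _ ↔ Summable fun m => ‖T (x (e m).1) (e m).2 - T (y (e m).1) (e m).2‖ ^ q := by
        rw [← e.summable_iff]
        simp only [Function.comp_def, lp.coeFn_sub, Pi.sub_apply]

theorem EMp_reducible_EXq_of_holderEmb {X : Type*} [NormedAddCommGroup X] [NormedSpace ℝ X]
    [CompleteSpace X] [TopologicalSpace.SeparableSpace X] [MeasurableSpace X] [BorelSpace X]
    (M : Type*) [MetricSpace M] [TopologicalSpace.SeparableSpace M] [CompleteSpace M]
    [MeasurableSpace M] [BorelSpace M]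
    (p q : ℝ) (hp : 1 ≤ p) (hq : 1 ≤ q)
    (hemb : ∃ (T : M → lp (fun _ : ℕ => X) (ENNReal.ofReal q)) (A : ℝ), 0 < A ∧
      ∀ u v : M, (1/A) * dist u v ^ (p/q) ≤ ‖T u - T v‖ ∧
        ‖T u - T v‖ ≤ A * dist u v ^ (p/q)) :
    BorelReducible
      (fun x y : ℕ → M => Summable fun n => dist (x n) (y n) ^ p)
      (fun x y : ℕ → X => Summable fun n => ‖x n - y n‖ ^ q) :=
  EMp_reducible_EXq_of_holderEmb_general M p q hp hq hemb
end
end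

section
/- Let X and Y be separable Banach spaces and p,q ∈ [1,+∞). Suppose there exist constants A,c,d > 0 and a Borel map T : X → ℓ_q(Y) satisfying: (1) for all u,v ∈ X, ‖u−v‖_X < c implies ‖T(u)−T(v)‖_{Y,q} < d; (2) ‖u−v‖_X ≥ c implies (1/A)·‖u−v‖_X^{p/q} ≤ ‖T(u)−T(v)‖_{Y,q} ≤ A·‖u−v‖_X^{p/q}. Then E(X,p) is Borel reducible to E(Y,q). -/
open Filter Topology MeasureTheory
open scoped ENNReal NNReal

noncomputable section

set_option maxHeartbeats 1000000 in
theorem EXp_reducible_EYq {X Y : Type*}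
    [NormedAddCommGroup X] [NormedSpace ℝ X] [CompleteSpace X]
    [TopologicalSpace.SeparableSpace X] [MeasurableSpace X] [BorelSpace X]
    [NormedAddCommGroup Y] [NormedSpace ℝ Y] [CompleteSpace Y]
    [TopologicalSpace.SeparableSpace Y] [MeasurableSpace Y] [BorelSpace Y]
    (p q : ℝ) (hp : 1 ≤ p) (hq : 1 ≤ q) [Fact (1 ≤ ENNReal.ofReal q)]
    (A c d : ℝ) (hA : 0 < A) (hc : 0 < c) (hd : 0 < d)
    (T : X → lp (fun _ : ℕ => Y) (ENNReal.ofReal q)) (hT : Measurable T)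
    (h1 : ∀ u v : X, ‖u - v‖ < c → ‖T u - T v‖ < d)
    (h2 : ∀ u v : X, c ≤ ‖u - v‖ →
      (1/A) * ‖u - v‖ ^ (p/q) ≤ ‖T u - T v‖ ∧ ‖T u - T v‖ ≤ A * ‖u - v‖ ^ (p/q)) :
    BorelReducible
      (fun x y : ℕ → X => Summable fun n => ‖x n - y n‖ ^ p)
      (fun x y : ℕ → Y => Summable fun n => ‖x n - y n‖ ^ q) := by
  classical
  have hq0 : (0:ℝ) < q := lt_of_lt_of_le one_pos hq
  have hp0 : (0:ℝ) < p := lt_of_lt_of_le one_pos hp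
  have hqne : q ≠ 0 := ne_of_gt hq0
  have hQ : (ENNReal.ofReal q).toReal = q := ENNReal.toReal_ofReal hq0.le
  have hQpos : 0 < (ENNReal.ofReal q).toReal := by rw [hQ]; exact hq0
  have hQne0 : (ENNReal.ofReal q) ≠ 0 := by
    simp [ENNReal.ofReal_eq_zero]
    linarith
  set e : ℕ × ℕ ≃ ℕ := Denumerable.eqv (ℕ × ℕ) with he
  have hbpow : ∀ (a : ℝ) (n : ℕ), ((2:ℝ) ^ a) ^ n = (2:ℝ) ^ (a * n) := by
    intro a n
    rw [← Real.rpow_natCast ((2:ℝ) ^ a) n, ← Real.rpow_mul (by norm_num)]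
  set r : ℝ := (2:ℝ) ^ (-(p/q)) with hr
  have hr0 : 0 < r := Real.rpow_pos_of_pos two_pos _
  set s : ℝ := (2:ℝ) ^ (-p) with hs
  have hs0 : 0 < s := Real.rpow_pos_of_pos two_pos _
  have hs1 : s < 1 := by
    rw [hs]
    exact Real.rpow_lt_one_of_one_lt_of_neg one_lt_two (by linarith)
  -- scalar identities
  have hrq : ∀ n : ℕ, (r ^ n) ^ q = s ^ n := by
    intro n
    rw [hr, hs, hbpow, hbpow, ← Real.rpow_mul (by norm_num),
      show -(p/q) * (n:ℝ) * q = -p * (n:ℝ) by field_simp]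
  have hsn2 : ∀ n : ℕ, s ^ n * ((2:ℝ) ^ n) ^ p = 1 := by
    intro n
    rw [hs, hbpow, ← Real.rpow_natCast (2:ℝ) n, ← Real.rpow_mul (by norm_num),
      ← Real.rpow_add two_pos,
      show -p * (n:ℝ) + (n:ℝ) * p = 0 by ring, Real.rpow_zero]
  -- the reduction map
  set θ : (ℕ → X) → ℕ → Y :=
    fun x m => r ^ (e.symm m).1 • (T ((2:ℝ) ^ (e.symm m).1 • x (e.symm m).1)) (e.symm m).2
    with hθ
  have contEval : ∀ i : ℕ, Continuous fun z : lp (fun _ : ℕ => Y) (ENNReal.ofReal q) => z i := by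
    intro i
    refine (LipschitzWith.of_dist_le_mul (K := 1) fun z w => ?_).continuous
    rw [dist_eq_norm, dist_eq_norm]
    have h : z i - w i = (z - w) i := by simp [lp.coeFn_sub]
    rw [h]
    simpa using lp.norm_apply_le_norm hQne0 (z - w) i
  have hθmeas : Measurable θ := by
    apply measurable_pi_lambda
    intro m
    have m1 : Measurable fun x : ℕ → X => (2:ℝ) ^ (e.symm m).1 • x (e.symm m).1 :=
      (measurable_pi_apply _).const_smul _
    have m2 : Measurable fun x : ℕ → X => T ((2:ℝ) ^ (e.symm m).1 • x (e.symm m).1) :=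
      hT.comp m1
    have m3 : Measurable fun x : ℕ → X =>
        (T ((2:ℝ) ^ (e.symm m).1 • x (e.symm m).1)) (e.symm m).2 :=
      (contEval (e.symm m).2).measurable.comp m2
    exact m3.const_smul _
  refine ⟨θ, hθmeas, ?_⟩
  intro x y
  set z : ℕ → lp (fun _ : ℕ => Y) (ENNReal.ofReal q) :=
    fun n => T ((2:ℝ) ^ n • x n) - T ((2:ℝ) ^ n • y n) with hz
  set F : ℕ → ℝ := fun n => ‖z n‖ with hF
  set t : ℕ → ℝ := fun n => ‖x n - y n‖ with ht
  have hdist : ∀ n : ℕ, ‖(2:ℝ) ^ n • x n - (2:ℝ) ^ n • y n‖ = (2:ℝ) ^ n * t n := by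
    intro n
    rw [← smul_sub, norm_smul, Real.norm_eq_abs, abs_of_pos (by positivity)]
  have hF0 : ∀ n, 0 ≤ F n := fun n => norm_nonneg _
  have ht0 : ∀ n, 0 ≤ t n := fun n => norm_nonneg _
  -- step A: reindex the flattened sum
  set g : ℕ × ℕ → ℝ := fun nk => s ^ nk.1 * ‖z nk.1 nk.2‖ ^ q with hg
  have hcomp : (fun m => ‖θ x m - θ y m‖ ^ q) ∘ e = g := by
    funext nk
    obtain ⟨n, i⟩ := nk
    have hsymm : e.symm (e (n, i)) = (n, i) := e.symm_apply_apply _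
    simp only [Function.comp_apply, hθ, hsymm]
    have hzi : (T ((2:ℝ) ^ n • x n)) i - (T ((2:ℝ) ^ n • y n)) i = z n i := by
      simp [hz, lp.coeFn_sub]
    rw [← smul_sub, hzi, norm_smul, Real.norm_eq_abs, abs_of_pos (pow_pos hr0 n),
      Real.mul_rpow (pow_pos hr0 n).le (norm_nonneg _), hrq n]
  have stepA : (Summable fun m => ‖θ x m - θ y m‖ ^ q) ↔ Summable g := by
    rw [← Equiv.summable_iff e, hcomp]
  -- step B : Fubini for nonneg
  have hslice : ∀ n, Summable fun i => g (n, i) := by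
    intro n
    have h5 := (lp.memℓp (z n)).summable hQpos
    rw [hQ] at h5
    simp only [hg]
    exact h5.mul_left _
  have htsum : ∀ n, ∑' i, g (n, i) = s ^ n * F n ^ q := by
    intro n
    rw [hg]
    simp only
    rw [tsum_mul_left]
    congr 1
    have h6 := lp.norm_rpow_eq_tsum hQpos (z n)
    rw [hQ] at h6
    exact h6.symm
  have hgnonneg : 0 ≤ g := by
    intro nk
    have : (0:ℝ) ≤ ‖z nk.1 nk.2‖ ^ q := Real.rpow_nonneg (norm_nonneg _) _
    positivity
  have stepB : Summable g ↔ Summable fun n => s ^ n * F n ^ q := by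
    rw [summable_prod_of_nonneg hgnonneg]
    constructor
    · rintro ⟨-, h⟩
      exact (summable_congr fun n => htsum n).mp h
    · intro h
      exact ⟨hslice, (summable_congr fun n => htsum n).mpr h⟩
  -- step C : main comparison
  have geom : Summable fun n : ℕ => s ^ n := summable_geometric_of_lt_one hs0.le hs1
  have stepC : (Summable fun n => t n ^ p) ↔ Summable fun n => s ^ n * F n ^ q := by
    constructor
    · intro hsum
      refine Summable.of_nonneg_of_le
        (fun n => by positivity)
        (fun n => ?_)
        (((geom.mul_right (d ^ q)).add (hsum.mul_left (A ^ q))))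
      by_cases hcase : (2:ℝ) ^ n * t n < c
      · have hFd : F n < d := h1 ((2:ℝ) ^ n • x n) ((2:ℝ) ^ n • y n)
          (by rw [hdist n]; exact hcase)
        have hFq : F n ^ q ≤ d ^ q := Real.rpow_le_rpow (hF0 n) hFd.le hq0.le
        have h1' : s ^ n * F n ^ q ≤ s ^ n * d ^ q :=
          mul_le_mul_of_nonneg_left hFq (pow_nonneg hs0.le n)
        have h2' : (0:ℝ) ≤ A ^ q * t n ^ p := by positivity
        calc s ^ n * F n ^ q ≤ s ^ n * d ^ q := h1'
          _ ≤ s ^ n * d ^ q + A ^ q * t n ^ p := le_add_of_nonneg_right h2'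
      · push_neg at hcase
        have hup := (h2 ((2:ℝ) ^ n • x n) ((2:ℝ) ^ n • y n)
          (by rw [hdist n]; exact hcase)).2
        rw [hdist n] at hup
        have h2nt : (0:ℝ) ≤ (2:ℝ) ^ n * t n := by positivity
        have hFq : F n ^ q ≤ (A * ((2:ℝ) ^ n * t n) ^ (p/q)) ^ q :=
          Real.rpow_le_rpow (hF0 n) hup hq0.le
        have hexp : (((2:ℝ) ^ n * t n) ^ (p/q)) ^ q = ((2:ℝ) ^ n * t n) ^ p := by
          rw [← Real.rpow_mul h2nt, div_mul_cancel₀ p hqne]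
        have hAq : (A * ((2:ℝ) ^ n * t n) ^ (p/q)) ^ q
            = A ^ q * (((2:ℝ) ^ n) ^ p * t n ^ p) := by
          rw [Real.mul_rpow hA.le (Real.rpow_nonneg h2nt _), hexp,
            Real.mul_rpow (by positivity) (ht0 n)]
        have hmain : s ^ n * F n ^ q ≤ A ^ q * t n ^ p := by
          have h3 : s ^ n * F n ^ q ≤ s ^ n * (A ^ q * (((2:ℝ) ^ n) ^ p * t n ^ p)) := by
            rw [← hAq]
            exact mul_le_mul_of_nonneg_left hFq (pow_nonneg hs0.le n)
          calc s ^ n * F n ^ q ≤ s ^ n * (A ^ q * (((2:ℝ) ^ n) ^ p * t n ^ p)) := h3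
            _ = (s ^ n * ((2:ℝ) ^ n) ^ p) * (A ^ q * t n ^ p) := by ring
            _ = A ^ q * t n ^ p := by rw [hsn2 n, one_mul]
        have h2' : (0:ℝ) ≤ s ^ n * d ^ q := by positivity
        calc s ^ n * F n ^ q ≤ A ^ q * t n ^ p := hmain
          _ ≤ s ^ n * d ^ q + A ^ q * t n ^ p := le_add_of_nonneg_left h2'
    · intro hsum
      refine Summable.of_nonneg_of_le
        (fun n => Real.rpow_nonneg (ht0 n) _)
        (fun n => ?_)
        ((geom.mul_left (c ^ p)).add (hsum.mul_left (A ^ q)))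
      by_cases hcase : (2:ℝ) ^ n * t n < c
      · have hkey : t n ^ p * ((2:ℝ) ^ n) ^ p ≤ c ^ p := by
          rw [← Real.mul_rpow (ht0 n) (by positivity)]
          refine Real.rpow_le_rpow (by positivity) ?_ hp0.le
          rw [mul_comm]
          exact hcase.le
        have hmain : t n ^ p ≤ c ^ p * s ^ n := by
          have h7 := mul_le_mul_of_nonneg_right hkey (pow_nonneg hs0.le n)
          calc t n ^ p = t n ^ p * (((2:ℝ) ^ n) ^ p * s ^ n) := by
                rw [mul_comm (((2:ℝ) ^ n) ^ p) (s ^ n), hsn2 n, mul_one]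
            _ = t n ^ p * ((2:ℝ) ^ n) ^ p * s ^ n := by ring
            _ ≤ c ^ p * s ^ n := h7
        have h2' : (0:ℝ) ≤ A ^ q * (s ^ n * F n ^ q) := by
          have : (0:ℝ) ≤ F n ^ q := Real.rpow_nonneg (hF0 n) _
          positivity
        calc t n ^ p ≤ c ^ p * s ^ n := hmain
          _ ≤ c ^ p * s ^ n + A ^ q * (s ^ n * F n ^ q) := le_add_of_nonneg_right h2'
      · push_neg at hcase
        have hlow := (h2 ((2:ℝ) ^ n • x n) ((2:ℝ) ^ n • y n)
          (by rw [hdist n]; exact hcase)).1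
        rw [hdist n] at hlow
        have h2nt : (0:ℝ) ≤ (2:ℝ) ^ n * t n := by positivity
        have hlhs0 : (0:ℝ) ≤ (1/A) * ((2:ℝ) ^ n * t n) ^ (p/q) := by positivity
        have hFq : ((1/A) * ((2:ℝ) ^ n * t n) ^ (p/q)) ^ q ≤ F n ^ q :=
          Real.rpow_le_rpow hlhs0 hlow hq0.le
        have hexp : (((2:ℝ) ^ n * t n) ^ (p/q)) ^ q = ((2:ℝ) ^ n * t n) ^ p := by
          rw [← Real.rpow_mul h2nt, div_mul_cancel₀ p hqne]
        have hAq : ((1/A) * ((2:ℝ) ^ n * t n) ^ (p/q)) ^ q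
            = (1/A) ^ q * (((2:ℝ) ^ n) ^ p * t n ^ p) := by
          rw [Real.mul_rpow (by positivity) (Real.rpow_nonneg h2nt _), hexp,
            Real.mul_rpow (by positivity) (ht0 n)]
        rw [hAq] at hFq
        have hmul : s ^ n * ((1/A) ^ q * (((2:ℝ) ^ n) ^ p * t n ^ p)) ≤ s ^ n * F n ^ q :=
          mul_le_mul_of_nonneg_left hFq (pow_nonneg hs0.le n)
        have hAA : A ^ q * (1/A) ^ q = 1 := by
          rw [← Real.mul_rpow hA.le (by positivity), mul_one_div_cancel hA.ne',
            Real.one_rpow]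
        have hmain : t n ^ p ≤ A ^ q * (s ^ n * F n ^ q) := by
          have h4 := mul_le_mul_of_nonneg_left hmul (by positivity : (0:ℝ) ≤ A ^ q)
          calc t n ^ p = A ^ q * (s ^ n * ((1/A) ^ q * (((2:ℝ) ^ n) ^ p * t n ^ p))) := by
                rw [show A ^ q * (s ^ n * ((1/A) ^ q * (((2:ℝ) ^ n) ^ p * t n ^ p)))
                    = (A ^ q * (1/A) ^ q) * ((s ^ n * ((2:ℝ) ^ n) ^ p) * t n ^ p) by ring,
                  hAA, hsn2 n]
                ring
            _ ≤ A ^ q * (s ^ n * F n ^ q) := h4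
        have h2' : (0:ℝ) ≤ c ^ p * s ^ n := by positivity
        calc t n ^ p ≤ A ^ q * (s ^ n * F n ^ q) := hmain
          _ ≤ c ^ p * s ^ n + A ^ q * (s ^ n * F n ^ q) := le_add_of_nonneg_left h2'
  change (Summable fun n => ‖x n - y n‖ ^ p) ↔ (Summable fun m => ‖θ x m - θ y m‖ ^ q)
  rw [stepA, stepB]
  exact stepC
end
end

section
/- Let X and U be Banach spaces with X nontrivial (containing a nonzero vector), and let α > 0. If X finitely Hölder(α) embeds into U, then α ≤ 1. -/
open Filter Topology

noncomputable section

/-- `M` finitely Hölder(`α`) embeds into the normed space `N`: there is a single constant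
`A > 0` such that every finite subset of `M` admits a map into `N` which is a
Hölder(`α`) embedding (with constant `A`) on that subset. -/
def FinitelyHolderEmb (M : Type*) [MetricSpace M] (N : Type*) [AddCommGroup N] [Norm N]
    (α : ℝ) : Prop :=
  ∃ A : ℝ, 0 < A ∧ ∀ F : Finset M, ∃ T : M → N,
    ∀ u ∈ F, ∀ v ∈ F,
      (1/A) * dist u v ^ α ≤ ‖T u - T v‖ ∧ ‖T u - T v‖ ≤ A * dist u v ^ α

theorem alpha_le_one_of_finHolderEmb' {X U : Type*}
    [NormedAddCommGroup X] [NormedSpace ℝ X] [CompleteSpace X]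
    [NormedAddCommGroup U] [NormedSpace ℝ U] [CompleteSpace U]
    (hX : ∃ e : X, e ≠ 0) (α : ℝ) (hα : 0 < α)
    (h : ∃ A : ℝ, 0 < A ∧ ∀ F : Finset X, ∃ T : X → U,
      ∀ u ∈ F, ∀ v ∈ F,
        (1/A) * dist u v ^ α ≤ ‖T u - T v‖ ∧ ‖T u - T v‖ ≤ A * dist u v ^ α) : α ≤ 1 := by
  by_contra h1
  push_neg at h1
  obtain ⟨A, hA, hF⟩ := h
  obtain ⟨e, he⟩ := hX
  set e' : X := ‖e‖⁻¹ • e with he'def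
  have hne : ‖e'‖ = 1 := by
    rw [he'def, norm_smul, norm_inv, norm_norm]
    exact inv_mul_cancel₀ (norm_ne_zero_iff.mpr he)
  have hdist : ∀ a b : ℝ, dist (a • e') (b • e') = |a - b| := by
    intro a b
    rw [dist_eq_norm, ← sub_smul, norm_smul, hne, mul_one, Real.norm_eq_abs]
  -- choose N
  have htend : Tendsto (fun n : ℕ => (n : ℝ) ^ (α - 1)) atTop atTop :=
    (tendsto_rpow_atTop (by linarith)).comp tendsto_natCast_atTop_atTop
  obtain ⟨N, hN1, hN2⟩ := ((htend.eventually_ge_atTop (A ^ 2 + 1)).and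
    (eventually_ge_atTop 1)).exists
  have hNpos : (0 : ℝ) < N := by exact_mod_cast hN2
  -- the finite set
  classical
  set F : Finset X := (Finset.range (N + 1)).image (fun k : ℕ => (k : ℝ) • e') with hFdef
  obtain ⟨T, hT⟩ := hF F
  have hmem : ∀ k : ℕ, k ≤ N → ((k : ℝ) • e') ∈ F := by
    intro k hk
    refine Finset.mem_image.mpr ⟨k, ?_, rfl⟩
    exact Finset.mem_range.mpr (by omega)
  -- telescoping upper bound
  have key : ∀ n : ℕ, n ≤ N → ‖T ((n : ℝ) • e') - T ((0 : ℝ) • e')‖ ≤ n * A := by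
    intro n
    induction n with
    | zero => intro _; simp
    | succ m ih =>
      intro hm
      have ihm := ih (by omega)
      have step := (hT _ (hmem (m + 1) hm) _ (hmem m (by omega))).2
      have hd : dist (((m + 1 : ℕ) : ℝ) • e') (((m : ℕ) : ℝ) • e') = 1 := by
        rw [hdist]; push_cast; simp
      rw [hd, Real.one_rpow, mul_one] at step
      calc ‖T (((m + 1 : ℕ) : ℝ) • e') - T ((0 : ℝ) • e')‖
          ≤ ‖T (((m + 1 : ℕ) : ℝ) • e') - T (((m : ℕ) : ℝ) • e')‖
            + ‖T (((m : ℕ) : ℝ) • e') - T ((0 : ℝ) • e')‖ := norm_sub_le_norm_sub_add_norm_sub _ _ _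
        _ ≤ A + m * A := add_le_add step ihm
        _ = (m + 1 : ℕ) * A := by push_cast; ring
  -- lower bound
  have low := (hT _ (hmem N le_rfl) _ (hmem 0 (by omega))).1
  have hdN : dist (((N : ℕ) : ℝ) • e') (((0 : ℕ) : ℝ) • e') = N := by
    rw [hdist]; simp [abs_of_nonneg hNpos.le]
  rw [hdN] at low
  have up := key N le_rfl
  have hNA : (1 / A) * (N : ℝ) ^ α ≤ N * A := by
    calc (1 / A) * (N : ℝ) ^ α ≤ ‖T ((N : ℝ) • e') - T ((0 : ℝ) • e')‖ := by
          convert low using 3 <;> norm_num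
      _ ≤ N * A := by convert up using 3 <;> norm_num
  have hpow : (N : ℝ) ^ α = (N : ℝ) ^ (α - 1) * N := by
    rw [show α = (α - 1) + 1 by ring, Real.rpow_add hNpos, Real.rpow_one]
    ring_nf
  have : (A ^ 2 + 1) * N ≤ A ^ 2 * N := by
    calc (A ^ 2 + 1) * N ≤ (N : ℝ) ^ (α - 1) * N := by
          apply mul_le_mul_of_nonneg_right hN1 hNpos.le
      _ = (N : ℝ) ^ α := hpow.symm
      _ ≤ A ^ 2 * N := by
          have h3 := mul_le_mul_of_nonneg_left hNA hA.le
          rw [← mul_assoc, mul_one_div, div_self hA.ne', one_mul] at h3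
          nlinarith [h3]
  nlinarith

theorem alpha_le_one_of_finHolderEmb {X U : Type*}
    [NormedAddCommGroup X] [NormedSpace ℝ X] [CompleteSpace X]
    [NormedAddCommGroup U] [NormedSpace ℝ U] [CompleteSpace U]
    (hX : ∃ e : X, e ≠ 0) (α : ℝ) (hα : 0 < α)
    (h : FinitelyHolderEmb X U α) : α ≤ 1 :=
  alpha_le_one_of_finHolderEmb' hX α hα h
end
end

section
/- For every α ∈ (0,1] there exist n ∈ ℕ, a map T : ℝ → ℝ^n (with the Euclidean norm on ℝ^n), and a constant A > 0 such that (1/A)·|s−t|^α ≤ ‖T(s)−T(t)‖ ≤ A·|s−t|^α for all s,t ∈ ℝ; that is, ℝ Hölder(α) embeds into the Euclidean space ℝ^n. -/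
/-!
Assouad's snowflake construction. For `j ∈ ℤ` let `φⱼ(t) = 2^{jα} (e^{it/2^j} - 1) ∈ ℂ`. If
`2^{j₀} ≤ |s - t| < 2^{j₀+1}`, then `‖φⱼ(s) - φⱼ(t)‖ ≤ 2 |s - t|^α c^{|j - j₀|}` with
`c = max (2^{-α}) (2^{α-1})`, using `|e^{ix} - 1| ≤ 2` at the coarse scales `j ≤ j₀` and
`|e^{ix} - 1| ≤ |x|` at the fine ones, while the term `j = j₀` has norm at least `|s - t|^α / π`.
For `α < 1` we have `c < 1`, so summing the terms gives the upper bound. Putting `φⱼ` into the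
coordinate `j mod K` of `ℂ^K` keeps the upper bound, and once `c^K ≤ 1/100` the term `j₀`
dominates the other terms of its coordinate, which gives the lower bound. All norms on
`ℂ^K ≅ ℝ^{2K}` are equivalent to the Euclidean one; for `α = 1` the identity of `ℝ` works.
-/

open Complex
open scoped NNReal

def HolderEmbeds (α : ℝ) (X Y : Type*) [PseudoMetricSpace X] [PseudoMetricSpace Y] : Prop :=
  ∃ (T : X → Y) (A : ℝ), 0 < A ∧
    ∀ u v, (1 / A) * dist u v ^ α ≤ dist (T u) (T v) ∧ dist (T u) (T v) ≤ A * dist u v ^ α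

namespace HolderEmbeds

variable {α : ℝ} {X Y Z : Type*} [PseudoMetricSpace X] [PseudoMetricSpace Y] [PseudoMetricSpace Z]

theorem refl_one : HolderEmbeds 1 X X :=
  ⟨id, 1, one_pos, fun u v => by simp⟩

theorem comp_bilipschitz (h : HolderEmbeds α X Y) {f : Y → Z} {K K' : ℝ≥0}
    (hf : LipschitzWith K f) (hf' : AntilipschitzWith K' f) : HolderEmbeds α X Z := by
  obtain ⟨T, A, hA, hT⟩ := h
  have hM : (0 : ℝ) < K + K' + 1 := by positivity
  refine ⟨f ∘ T, A * (K + K' + 1), by positivity, fun u v => ⟨?_, ?_⟩⟩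
  · have hD := dist_nonneg (x := f (T u)) (y := f (T v))
    calc 1 / (A * (K + K' + 1)) * dist u v ^ α = (1 / A * dist u v ^ α) / (K + K' + 1) := by
          field_simp
      _ ≤ K' * dist (f (T u)) (f (T v)) / (K + K' + 1) :=
          div_le_div_of_nonneg_right ((hT u v).1.trans (hf'.le_mul_dist _ _)) hM.le
      _ ≤ dist (f (T u)) (f (T v)) := by
          rw [div_le_iff₀ hM]; nlinarith [K.2]
  · calc dist (f (T u)) (f (T v)) ≤ K * (A * dist u v ^ α) :=
          (hf.dist_le_mul _ _).trans (by gcongr; exact (hT u v).2)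
      _ ≤ A * (K + K' + 1) * dist u v ^ α := by
          have := Real.rpow_nonneg (dist_nonneg (x := u) (y := v)) α
          nlinarith [K'.2, mul_nonneg hA.le this]

theorem toEuclidean {E : Type*} [NormedAddCommGroup E] [NormedSpace ℝ E] [FiniteDimensional ℝ E]
    (h : HolderEmbeds α X E) : HolderEmbeds α X (EuclideanSpace ℝ (Fin (Module.finrank ℝ E))) :=
  let e : E ≃L[ℝ] _ := _root_.toEuclidean
  h.comp_bilipschitz e.lipschitz (e.symm.lipschitz.to_rightInverse e.symm_apply_apply)

end HolderEmbeds

theorem hasSum_pow_natAbs {c : ℝ} (hc0 : 0 ≤ c) (hc1 : c < 1) :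
    HasSum (fun k : ℤ => c ^ k.natAbs) ((1 + c) / (1 - c)) := by
  have hgeom := hasSum_geometric_of_lt_one hc0 hc1
  have hneg : HasSum (fun n : ℕ => c ^ (-(n + 1 : ℤ)).natAbs) (c * (1 - c)⁻¹) := by
    have hterm : (fun n : ℕ => c ^ (-(n + 1 : ℤ)).natAbs) = fun n => c * c ^ n := by
      ext n; rw [← pow_succ']; congr 1
    exact hterm ▸ hgeom.mul_left c
  convert HasSum.of_nat_of_neg_add_one (f := fun k : ℤ => c ^ k.natAbs) (by simpa using hgeom)
    hneg using 1
  field_simp [(sub_pos.2 hc1).ne']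

theorem hasSum_pow_natAbs_sub {c : ℝ} (hc0 : 0 ≤ c) (hc1 : c < 1) (j₀ : ℤ) :
    HasSum (fun j : ℤ => c ^ (j - j₀).natAbs) ((1 + c) / (1 - c)) :=
  (Equiv.subRight j₀).hasSum_iff (f := fun k : ℤ => c ^ k.natAbs) |>.2 (hasSum_pow_natAbs hc0 hc1)

theorem summable_norm_of_norm_le_pow_natAbs_sub {E : Type*} [SeminormedAddCommGroup E]
    {f : ℤ → E} {C c : ℝ} (hc0 : 0 ≤ c) (hc1 : c < 1) (j₀ : ℤ)
    (hf : ∀ j, ‖f j‖ ≤ C * c ^ (j - j₀).natAbs) : Summable fun j => ‖f j‖ :=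
  .of_nonneg_of_le (fun _ => norm_nonneg _) hf
    ((hasSum_pow_natAbs_sub hc0 hc1 j₀).summable.mul_left C)

theorem norm_tsum_le_of_norm_le_pow_natAbs_sub {E : Type*} [SeminormedAddCommGroup E]
    {f : ℤ → E} {C c : ℝ} (hc0 : 0 ≤ c) (hc1 : c < 1) (j₀ : ℤ)
    (hf : ∀ j, ‖f j‖ ≤ C * c ^ (j - j₀).natAbs) :
    ‖∑' j, f j‖ ≤ C * ((1 + c) / (1 - c)) :=
  tsum_of_norm_bounded ((hasSum_pow_natAbs_sub hc0 hc1 j₀).mul_left C) hf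

theorem norm_sub_le_norm_tsum_of_norm_le_pow_natAbs {E : Type*} [NormedAddCommGroup E]
    [CompleteSpace E] {g : ℤ → E} {C d : ℝ} (hd0 : 0 ≤ d) (hd1 : d < 1)
    (hg : ∀ m, ‖g m‖ ≤ C * d ^ m.natAbs) :
    ‖g 0‖ - C * (2 * d / (1 - d)) ≤ ‖∑' m, g m‖ := by
  have hbound := (hasSum_pow_natAbs hd0 hd1).mul_left C
  have hsum : Summable g := .of_norm_bounded hbound.summable hg
  have htail : ‖∑' m, Function.update g 0 0 m‖ ≤ C * (2 * d / (1 - d)) := by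
    have hval : 0 - C * d ^ (0 : ℤ).natAbs + C * ((1 + d) / (1 - d)) = C * (2 * d / (1 - d)) := by
      field_simp [(sub_pos.2 hd1).ne']; ring
    refine tsum_of_norm_bounded (hval ▸ hbound.update 0 0) fun m => ?_
    rcases eq_or_ne m 0 with rfl | hm
    · simp
    · simpa [hm] using hg m
  have hsplit : ∑' m, g m = g 0 + ∑' m, Function.update g 0 0 m := by
    rw [(hsum.hasSum.update 0 0).tsum_eq]; abel
  have htri := norm_sub_le (g 0 + ∑' m, Function.update g 0 0 m) (∑' m, Function.update g 0 0 m)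
  rw [add_sub_cancel_right] at htri
  rw [hsplit]
  linarith

section residueSum

variable {E : Type*} [NormedAddCommGroup E]

noncomputable def residueSum (K : ℕ) (f : ℤ → E) : ZMod K → E :=
  ∑' j : ℤ, Pi.single (j : ZMod K) (f j)

variable {K : ℕ} [NeZero K]

theorem summable_single_intCast [CompleteSpace E] {f : ℤ → E} (hf : Summable fun j => ‖f j‖) :
    Summable fun j : ℤ => (Pi.single (j : ZMod K) (f j) : ZMod K → E) :=
  .of_norm (by simpa [Pi.norm_single] using hf)

theorem residueSum_sub [CompleteSpace E] {f g : ℤ → E} (hf : Summable fun j => ‖f j‖)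
    (hg : Summable fun j => ‖g j‖) :
    residueSum K f - residueSum K g = residueSum K (fun j => f j - g j) := by
  simp only [residueSum, Pi.single_sub]
  exact ((summable_single_intCast hf).tsum_sub (summable_single_intCast hg)).symm

theorem residueSum_apply_intCast [CompleteSpace E] {f : ℤ → E} (hf : Summable fun j => ‖f j‖)
    (j₀ : ℤ) :
    residueSum K f j₀ = ∑' m : ℤ, f (j₀ + K * m) := by
  have hinj : Function.Injective fun m : ℤ => j₀ + K * m := fun m m' h => by
    simpa [NeZero.ne K] using h
  rw [residueSum, tsum_apply (summable_single_intCast hf), ← hinj.tsum_eq]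
  · simp
  · intro j hj
    rw [Function.mem_support, Pi.single_apply, ite_ne_right_iff,
      ZMod.intCast_eq_intCast_iff_dvd_sub] at hj
    obtain ⟨m, hm⟩ := hj.1
    exact ⟨m, by simp only; omega⟩

variable {f : ℤ → E} {C c : ℝ} {j₀ : ℤ}

theorem norm_residueSum_le (hc0 : 0 ≤ c) (hc1 : c < 1)
    (hf : ∀ j, ‖f j‖ ≤ C * c ^ (j - j₀).natAbs) :
    ‖residueSum K f‖ ≤ C * ((1 + c) / (1 - c)) :=
  norm_tsum_le_of_norm_le_pow_natAbs_sub hc0 hc1 j₀ (by simpa [Pi.norm_single] using hf)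

theorem norm_sub_le_norm_residueSum [CompleteSpace E] (hc0 : 0 ≤ c) (hc1 : c < 1)
    (hf : ∀ j, ‖f j‖ ≤ C * c ^ (j - j₀).natAbs) :
    ‖f j₀‖ - C * (2 * c ^ K / (1 - c ^ K)) ≤ ‖residueSum K f‖ := by
  have hrow : ∀ m : ℤ, ‖f (j₀ + K * m)‖ ≤ C * (c ^ K) ^ m.natAbs := fun m => by
    simpa [Int.natAbs_mul, pow_mul] using hf (j₀ + K * m)
  calc ‖f j₀‖ - C * (2 * c ^ K / (1 - c ^ K)) ≤ ‖∑' m : ℤ, f (j₀ + K * m)‖ := by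
        have := norm_sub_le_norm_tsum_of_norm_le_pow_natAbs (pow_nonneg hc0 K)
          (pow_lt_one₀ hc0 hc1 (NeZero.ne K)) hrow
        rwa [mul_zero, add_zero] at this
    _ = ‖residueSum K f j₀‖ := by
        have hs : Summable fun j => ‖f j‖ := summable_norm_of_norm_le_pow_natAbs_sub hc0 hc1 j₀ hf
        rw [residueSum_apply_intCast hs]
    _ ≤ ‖residueSum K f‖ := norm_le_pi_norm _ _

end residueSum

theorem norm_exp_I_mul_ofReal_sub_one_le_two (x : ℝ) : ‖exp (I * x) - 1‖ ≤ 2 :=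
  (norm_sub_le _ _).trans (by rw [norm_exp_I_mul_ofReal, norm_one]; norm_num)

theorem two_div_pi_le_norm_exp_I_mul_ofReal_sub_one {x : ℝ} (h1 : 1 ≤ |x|) (h2 : |x| ≤ 2) :
    2 / Real.pi ≤ ‖exp (I * x) - 1‖ := by
  have hpi := Real.pi_gt_three
  have habs : |x / 2| ≤ Real.pi / 2 := by rw [abs_div, abs_two]; linarith
  rw [norm_exp_I_mul_ofReal_sub_one, norm_mul, Real.norm_eq_abs, Real.norm_eq_abs, abs_two,
    Real.abs_sin_eq_sin_abs_of_abs_le_pi (by linarith)]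
  have hjordan := Real.mul_le_sin (abs_nonneg (x / 2)) habs
  rw [abs_div, abs_two] at hjordan ⊢
  have hhalf : 2 / Real.pi * (1 / 2) ≤ 2 / Real.pi * (|x| / 2) := by gcongr
  linarith

theorem zpow_add_natCast_rpow {x : ℝ} (hx : 0 < x) (j : ℤ) (m : ℕ) (γ : ℝ) :
    (x ^ (j + m)) ^ γ = (x ^ j) ^ γ * (x ^ γ) ^ m := by
  rw [zpow_add₀ hx.ne', zpow_natCast, Real.mul_rpow (by positivity) (by positivity),
    ← Real.rpow_natCast_mul hx.le, mul_comm (m : ℝ) γ, Real.rpow_mul_natCast hx.le, mul_comm]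

noncomputable def snowflakeRatio (α : ℝ) : ℝ := max ((2 : ℝ) ^ (-α)) (2 ^ (α - 1))

theorem snowflakeRatio_pos (α : ℝ) : 0 < snowflakeRatio α :=
  lt_max_of_lt_left (by positivity)

theorem snowflakeRatio_lt_one {α : ℝ} (hα0 : 0 < α) (hα1 : α < 1) : snowflakeRatio α < 1 :=
  max_lt (Real.rpow_lt_one_of_one_lt_of_neg one_lt_two (by linarith))
    (Real.rpow_lt_one_of_one_lt_of_neg one_lt_two (by linarith))

noncomputable def snowflakeTerm (α : ℝ) (j : ℤ) (t : ℝ) : ℂ :=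
  (((2 : ℝ) ^ j) ^ α : ℝ) * (exp (I * (t / 2 ^ j : ℝ)) - 1)

@[simp]
theorem snowflakeTerm_zero_right (α : ℝ) (j : ℤ) : snowflakeTerm α j 0 = 0 := by
  simp [snowflakeTerm]

theorem norm_snowflakeTerm_sub (α : ℝ) (j : ℤ) (s t : ℝ) :
    ‖snowflakeTerm α j s - snowflakeTerm α j t‖
      = ((2 : ℝ) ^ j) ^ α * ‖exp (I * ((s - t) / 2 ^ j : ℝ)) - 1‖ := by
  have hfactor : snowflakeTerm α j s - snowflakeTerm α j t
      = (((2 : ℝ) ^ j) ^ α : ℝ) * exp (I * (t / 2 ^ j : ℝ))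
        * (exp (I * ((s - t) / 2 ^ j : ℝ)) - 1) := by
    simp only [snowflakeTerm]
    rw [show I * ((s - t) / 2 ^ j : ℝ) = I * (s / 2 ^ j : ℝ) - I * (t / 2 ^ j : ℝ) by
      push_cast; ring, exp_sub]
    field_simp
    ring
  rw [hfactor, norm_mul, norm_mul, norm_exp_I_mul_ofReal, norm_real,
    Real.norm_of_nonneg (by positivity), mul_one]

section Scale

variable {α : ℝ} {s t : ℝ} {j₀ : ℤ}

theorem norm_snowflakeTerm_sub_le_coarse (hα0 : 0 ≤ α) (j : ℤ) (m : ℕ)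
    (hl : 2 ^ (j + m) ≤ |s - t|) :
    ‖snowflakeTerm α j s - snowflakeTerm α j t‖ ≤ 2 * |s - t| ^ α * snowflakeRatio α ^ m := by
  have hscale : ((2 : ℝ) ^ j) ^ α = ((2 : ℝ) ^ (j + m)) ^ α * ((2 : ℝ) ^ (-α)) ^ m := by
    rw [zpow_add_natCast_rpow two_pos, mul_assoc, ← mul_pow, ← Real.rpow_add two_pos,
      add_neg_cancel, Real.rpow_zero, one_pow, mul_one]
  calc ‖snowflakeTerm α j s - snowflakeTerm α j t‖
      ≤ ((2 : ℝ) ^ (j + m)) ^ α * ((2 : ℝ) ^ (-α)) ^ m * 2 := by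
        rw [norm_snowflakeTerm_sub, hscale]
        gcongr
        exact norm_exp_I_mul_ofReal_sub_one_le_two _
    _ ≤ |s - t| ^ α * snowflakeRatio α ^ m * 2 := by
        gcongr
        exact le_max_left _ _
    _ = _ := by ring

theorem norm_snowflakeTerm_sub_le_fine (hα0 : 0 ≤ α) (hα1 : α ≤ 1) (hv : 0 < |s - t|)
    (j : ℤ) (m : ℕ) (hu : |s - t| < 2 ^ (j + 1)) :
    ‖snowflakeTerm α (j + m) s - snowflakeTerm α (j + m) t‖
      ≤ 2 * |s - t| ^ α * snowflakeRatio α ^ m := by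
  set v := |s - t|
  have h2j : (0 : ℝ) < 2 ^ (j + m) := zpow_pos two_pos _
  have hphase : ‖exp (I * ((s - t) / 2 ^ (j + m) : ℝ)) - 1‖ ≤ v / 2 ^ (j + m) := by
    refine Real.norm_exp_I_mul_ofReal_sub_one_le.trans_eq ?_
    rw [Real.norm_eq_abs, abs_div, abs_of_pos h2j]
  have hhalf : v / 2 ≤ 2 ^ j := by
    rw [zpow_add_one₀ two_ne_zero] at hu; linarith
  calc ‖snowflakeTerm α (j + m) s - snowflakeTerm α (j + m) t‖
      ≤ ((2 : ℝ) ^ (j + m)) ^ α * (v / 2 ^ (j + m)) := by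
        rw [norm_snowflakeTerm_sub]; gcongr
    _ = v * ((2 : ℝ) ^ j) ^ (α - 1) * ((2 : ℝ) ^ (α - 1)) ^ m := by
        rw [mul_assoc, ← zpow_add_natCast_rpow two_pos, Real.rpow_sub_one h2j.ne']
        ring
    _ ≤ v * (v / 2) ^ (α - 1) * snowflakeRatio α ^ m := by
        refine mul_le_mul (mul_le_mul_of_nonneg_left ?_ hv.le)
          (pow_le_pow_left₀ (by positivity) (le_max_right _ _) m) (by positivity) (by positivity)
        exact Real.rpow_le_rpow_of_nonpos (by positivity) hhalf (by linarith)
    _ = 2 * (v / 2) ^ α * snowflakeRatio α ^ m := by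
        rw [Real.rpow_sub_one (by positivity)]
        field_simp
    _ ≤ _ := by
        refine mul_le_mul_of_nonneg_right ?_ (pow_nonneg (snowflakeRatio_pos α).le _)
        gcongr
        linarith

theorem norm_snowflakeTerm_sub_le (hα0 : 0 ≤ α) (hα1 : α ≤ 1)
    (hl : 2 ^ j₀ ≤ |s - t|) (hu : |s - t| < 2 ^ (j₀ + 1)) (j : ℤ) :
    ‖snowflakeTerm α j s - snowflakeTerm α j t‖
      ≤ 2 * |s - t| ^ α * snowflakeRatio α ^ (j - j₀).natAbs := by
  rcases le_or_gt j j₀ with hj | hj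
  · obtain ⟨m, rfl⟩ : ∃ m : ℕ, j₀ = j + m := ⟨(j₀ - j).toNat, by omega⟩
    rw [show (j - (j + m)).natAbs = m by omega]
    exact norm_snowflakeTerm_sub_le_coarse hα0 j m hl
  · obtain ⟨m, rfl⟩ : ∃ m : ℕ, j = j₀ + m := ⟨(j - j₀).toNat, by omega⟩
    rw [show (j₀ + m - j₀).natAbs = m by omega]
    exact norm_snowflakeTerm_sub_le_fine hα0 hα1 ((zpow_pos two_pos j₀).trans_le hl) j₀ m hu

theorem le_norm_snowflakeTerm_sub (hα0 : 0 ≤ α) (hα1 : α ≤ 1)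
    (hl : 2 ^ j₀ ≤ |s - t|) (hu : |s - t| < 2 ^ (j₀ + 1)) :
    |s - t| ^ α / Real.pi ≤ ‖snowflakeTerm α j₀ s - snowflakeTerm α j₀ t‖ := by
  set v := |s - t|
  have h2j : (0 : ℝ) < 2 ^ j₀ := zpow_pos two_pos _
  have hv : 0 < v := h2j.trans_le hl
  have hu' : v < 2 ^ j₀ * 2 := by rwa [zpow_add_one₀ two_ne_zero] at hu
  rw [norm_snowflakeTerm_sub]
  have hphase : 2 / Real.pi ≤ ‖exp (I * ((s - t) / 2 ^ j₀ : ℝ)) - 1‖ := by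
    apply two_div_pi_le_norm_exp_I_mul_ofReal_sub_one
    · rw [abs_div, abs_of_pos h2j, le_div_iff₀ h2j]; linarith
    · rw [abs_div, abs_of_pos h2j, div_le_iff₀ h2j]; linarith
  have hscale : v ^ α / 2 ≤ ((2 : ℝ) ^ j₀) ^ α :=
    calc v ^ α / 2 ≤ v ^ α / 2 ^ α := by
          gcongr
          simpa using Real.rpow_le_rpow_of_exponent_le one_le_two hα1
      _ = (v / 2) ^ α := (Real.div_rpow hv.le zero_le_two α).symm
      _ ≤ _ := by gcongr; linarith
  calc v ^ α / Real.pi = v ^ α / 2 * (2 / Real.pi) := by field_simp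
    _ ≤ _ := by gcongr

end Scale

theorem exists_snowflakeTerm_scale {α : ℝ} (hα0 : 0 ≤ α) (hα1 : α ≤ 1) {s t : ℝ} (hst : s ≠ t) :
    ∃ j₀ : ℤ, |s - t| ^ α / Real.pi ≤ ‖snowflakeTerm α j₀ s - snowflakeTerm α j₀ t‖ ∧
      ∀ j, ‖snowflakeTerm α j s - snowflakeTerm α j t‖
        ≤ 2 * |s - t| ^ α * snowflakeRatio α ^ (j - j₀).natAbs := by
  have hv : 0 < |s - t| := abs_pos.2 (sub_ne_zero.2 hst)
  have hl : (2 : ℝ) ^ Int.log 2 |s - t| ≤ |s - t| := by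
    exact_mod_cast Int.zpow_log_le_self one_lt_two hv
  have hu : |s - t| < (2 : ℝ) ^ (Int.log 2 |s - t| + 1) := by
    exact_mod_cast Int.lt_zpow_succ_log_self (R := ℝ) one_lt_two |s - t|
  exact ⟨_, le_norm_snowflakeTerm_sub hα0 hα1 hl hu, norm_snowflakeTerm_sub_le hα0 hα1 hl hu⟩

theorem summable_norm_snowflakeTerm {α : ℝ} (hα0 : 0 < α) (hα1 : α < 1) (t : ℝ) :
    Summable fun j => ‖snowflakeTerm α j t‖ := by
  rcases eq_or_ne t 0 with rfl | ht
  · simp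
  obtain ⟨j₀, -, hdecay⟩ := exists_snowflakeTerm_scale hα0.le hα1.le ht (t := 0)
  exact summable_norm_of_norm_le_pow_natAbs_sub (snowflakeRatio_pos α).le
    (snowflakeRatio_lt_one hα0 hα1) j₀ (by simpa using hdecay)

noncomputable def snowflakeMap (α : ℝ) (K : ℕ) (t : ℝ) : ZMod K → ℂ :=
  residueSum K fun j => snowflakeTerm α j t

theorem holderEmbeds_real_zmod {α : ℝ} (hα0 : 0 < α) (hα1 : α < 1) {K : ℕ} [NeZero K]
    (hK : snowflakeRatio α ^ K ≤ 1 / 100) : HolderEmbeds α ℝ (ZMod K → ℂ) := by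
  set c := snowflakeRatio α
  have hc0 : 0 ≤ c := (snowflakeRatio_pos α).le
  have hc1 : c < 1 := snowflakeRatio_lt_one hα0 hα1
  refine ⟨snowflakeMap α K, 4 / (1 - c), div_pos four_pos (sub_pos.2 hc1), fun s t => ?_⟩
  rw [Real.dist_eq, dist_eq_norm, snowflakeMap, snowflakeMap,
    residueSum_sub (summable_norm_snowflakeTerm hα0 hα1 s) (summable_norm_snowflakeTerm hα0 hα1 t)]
  rcases eq_or_ne s t with rfl | hst
  · simp [residueSum, Real.zero_rpow hα0.ne']
  obtain ⟨j₀, hmain, hdecay⟩ := exists_snowflakeTerm_scale hα0.le hα1.le hst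
  have hv : 0 ≤ |s - t| ^ α := by positivity
  constructor
  · have hlow := norm_sub_le_norm_residueSum (K := K) hc0 hc1 hdecay
    have htail : 2 * c ^ K / (1 - c ^ K) ≤ 2 / 99 := by
      rw [div_le_div_iff₀ (by linarith) (by norm_num)]; linarith
    have hpi : 1 / 4 + 4 / 99 ≤ 1 / Real.pi := by
      rw [le_div_iff₀ Real.pi_pos]; nlinarith [Real.pi_lt_d2]
    have hA : 1 / (4 / (1 - c)) ≤ 1 / 4 := by
      rw [one_div_div, div_le_div_iff_of_pos_right four_pos]; linarith
    calc 1 / (4 / (1 - c)) * |s - t| ^ α ≤ (1 / Real.pi - 4 / 99) * |s - t| ^ α := by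
          gcongr; linarith
      _ ≤ _ := by
          rw [sub_mul, one_div_mul_eq_div]
          nlinarith [mul_le_mul_of_nonneg_left htail hv]
  · calc _ ≤ 2 * |s - t| ^ α * ((1 + c) / (1 - c)) := norm_residueSum_le hc0 hc1 hdecay
      _ = 2 * (1 + c) * |s - t| ^ α / (1 - c) := by ring
      _ ≤ 4 * |s - t| ^ α / (1 - c) := by gcongr; linarith
      _ = 4 / (1 - c) * |s - t| ^ α := by ring

/-- For every `α ∈ (0,1]`, the real line Hölder(`α`) embeds into some Euclidean space `ℝ^n`. -/
theorem real_holder_embeds_euclidean (α : ℝ) (hα0 : 0 < α) (hα1 : α ≤ 1) :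
    ∃ (n : ℕ) (T : ℝ → EuclideanSpace ℝ (Fin n)) (A : ℝ), 0 < A ∧
      ∀ s t : ℝ,
        (1/A) * |s - t| ^ α ≤ ‖T s - T t‖ ∧ ‖T s - T t‖ ≤ A * |s - t| ^ α := by
  obtain ⟨n, T, A, hA, hT⟩ : ∃ n : ℕ, HolderEmbeds α ℝ (EuclideanSpace ℝ (Fin n)) := by
    rcases hα1.lt_or_eq with hα1 | rfl
    · have hc0 := (snowflakeRatio_pos α).le
      have hc1 := snowflakeRatio_lt_one hα0 hα1
      obtain ⟨K, hK⟩ := exists_pow_lt_of_lt_one (by norm_num : (0 : ℝ) < 1 / 100) hc1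
      have hK' : snowflakeRatio α ^ (K + 1) ≤ 1 / 100 :=
        (pow_le_pow_of_le_one hc0 hc1.le K.le_succ).trans hK.le
      exact ⟨_, (holderEmbeds_real_zmod hα0 hα1 hK').toEuclidean⟩
    · exact ⟨_, (HolderEmbeds.refl_one (X := ℝ)).toEuclidean⟩
  exact ⟨n, T, A, hA, fun s t => by simpa only [dist_eq_norm, Real.norm_eq_abs] using hT s t⟩
end

section
/- For every r ∈ [1,+∞), L_r finitely Lipschitz embeds into ℓ_r: there exists A > 0 such that for every finite subset F ⊆ L_r there is a map T_F : F → ℓ_r with (1/A)·‖f−g‖_r ≤ ‖T_F(f)−T_F(g)‖_r ≤ A·‖f−g‖_r for all f,g ∈ F. -/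
open MeasureTheory
open scoped ENNReal

noncomputable section

/-- The sequence space `ℓ_r` of real sequences with summable `r`-th power. -/
abbrev ellSp (r : ℝ) : Type := lp (fun _ : ℕ => ℝ) (ENNReal.ofReal r)

/-- The Lebesgue space `L_r[0,1]` (with respect to Lebesgue measure on `[0,1]`). -/
abbrev LSp (r : ℝ) : Type :=
  MeasureTheory.Lp ℝ (ENNReal.ofReal r) ((volume : Measure ℝ).restrict (Set.Icc 0 1))

/-! Simple functions are dense in `L_r`, so a finite set `F` can be replaced by simple functions
closer to its points than a quarter of their minimal mutual distance, which distorts distances by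
a factor of at most `2`. Finitely many simple functions are constant on the atoms `E_k` of a finite
measurable partition, and `f = ∑ c_k 1_{E_k} ↦ (c_k μ(E_k) ^ (1/r))_k` is an isometry into `ℓ_r`. -/

open Filter Topology

theorem Finset.exists_pos_le_dist_of_ne {X : Type*} [MetricSpace X] (F : Finset X) :
    ∃ δ > 0, ∀ x ∈ F, ∀ y ∈ F, x ≠ y → δ ≤ dist x y := by
  have h : ∀ᶠ δ in 𝓝[>] (0 : ℝ), ∀ x ∈ F, ∀ y ∈ F, x ≠ y → δ ≤ dist x y := by
    simp only [Filter.eventually_all_finset]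
    intro x _ y _
    by_cases hxy : x = y
    · simp [hxy]
    · filter_upwards [nhdsWithin_le_nhds (eventually_le_nhds (dist_pos.2 hxy))] with δ hδ
      exact fun _ => hδ
  obtain ⟨δ, hδ, hδpos⟩ := (h.and self_mem_nhdsWithin).exists
  exact ⟨δ, hδpos, hδ⟩

theorem exists_lp_nat_norm_sub_rpow_eq_sum {κ : Type*} [Fintype κ] {p : ℝ≥0∞}
    (hp : 0 < p.toReal) :
    ∃ Φ : (κ → ℝ) → lp (fun _ : ℕ => ℝ) p,
      ∀ x y, ‖Φ x - Φ y‖ ^ p.toReal = ∑ k, |x k - y k| ^ p.toReal := by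
  obtain ⟨e, he⟩ := Countable.exists_injective_nat κ
  refine ⟨fun x => ∑ k, lp.single p (e k) (x k), fun x y => ?_⟩
  have hsum : ∑ k, lp.single p (e k) (x k) - ∑ k, lp.single p (e k) (y k)
      = ∑ n ∈ Finset.univ.map ⟨e, he⟩, lp.single p n (Function.extend e (x - y) 0 n) := by
    simp [Finset.sum_map, he.extend_apply, ← Finset.sum_sub_distrib, lp.single_sub]
  rw [hsum, lp.norm_sum_single hp]
  simp [Finset.sum_map, he.extend_apply]

namespace MeasureTheory

variable {α : Type*} [MeasurableSpace α]

def SimpleFunc.pi {ι β : Type*} [Finite ι] (s : ι → SimpleFunc α β) : SimpleFunc α (ι → β) where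
  toFun a i := s i a
  measurableSet_fiber' v := by
    have : (fun a i => s i a) ⁻¹' {v} = ⋂ i, s i ⁻¹' {v i} := by
      ext a
      simp [funext_iff]
    rw [this]
    exact .iInter fun i => (s i).measurableSet_fiber (v i)
  finite_range' := (Set.Finite.pi fun i => (s i).finite_range).subset <| by
    rintro _ ⟨a, rfl⟩ i -
    exact ⟨a, rfl⟩

theorem toReal_eLpNorm_rpow {E : Type*} [NormedAddCommGroup E] {μ : Measure α} {p : ℝ≥0∞}
    (hp0 : p ≠ 0) (hp : p ≠ ∞) (f : α → E) :
    (eLpNorm f p μ).toReal ^ p.toReal = (∫⁻ a, ‖f a‖ₑ ^ p.toReal ∂μ).toReal := by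
  rw [eLpNorm_eq_lintegral_rpow_enorm_toReal hp0 hp, ENNReal.toReal_rpow, ← ENNReal.rpow_mul,
    one_div_mul_cancel (ENNReal.toReal_pos hp0 hp).ne', ENNReal.rpow_one]

theorem SimpleFunc.exists_lp_nat_norm_sub_eq_eLpNorm_sub {ι : Type*} [Finite ι]
    {μ : Measure α} {p : ℝ≥0∞} (hp0 : p ≠ 0) (hp : p ≠ ∞) (s : ι → SimpleFunc α ℝ)
    (hs : ∀ i, MemLp (s i) p μ) :
    ∃ y : ι → lp (fun _ : ℕ => ℝ) p, ∀ i j, ‖y i - y j‖ = (eLpNorm (s i - s j) p μ).toReal := by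
  set q := p.toReal
  have hq : 0 < q := ENNReal.toReal_pos hp0 hp
  set S := SimpleFunc.pi s
  obtain ⟨Φ, hΦ⟩ := exists_lp_nat_norm_sub_rpow_eq_sum (κ := S.range) hq
  refine ⟨fun i => Φ fun v => v.1 i * μ.real (S ⁻¹' {v.1}) ^ q⁻¹, fun i j => ?_⟩
  have hlint : ∫⁻ a, ‖(s i - s j) a‖ₑ ^ q ∂μ
      = ∑ v ∈ S.range, ‖v i - v j‖ₑ ^ q * μ (S ⁻¹' {v}) :=
    (SimpleFunc.lintegral_eq_lintegral _ μ).trans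
      (SimpleFunc.map_lintegral (fun v : ι → ℝ => ‖v i - v j‖ₑ ^ q) S)
  have hfin : ∫⁻ a, ‖(s i - s j) a‖ₑ ^ q ∂μ ≠ ∞ :=
    (lintegral_rpow_enorm_lt_top_of_eLpNorm_lt_top hp0 hp ((hs i).sub (hs j)).eLpNorm_lt_top).ne
  have hterm (v : ι → ℝ) : |v i * μ.real (S ⁻¹' {v}) ^ q⁻¹ - v j * μ.real (S ⁻¹' {v}) ^ q⁻¹| ^ q
      = (‖v i - v j‖ₑ ^ q * μ (S ⁻¹' {v})).toReal := by
    rw [← sub_mul, abs_mul, abs_of_nonneg (a := μ.real _ ^ q⁻¹) (by positivity),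
      Real.mul_rpow (abs_nonneg _) (by positivity), Real.rpow_inv_rpow measureReal_nonneg hq.ne',
      ENNReal.toReal_mul, ← ENNReal.toReal_rpow, toReal_enorm, Real.norm_eq_abs, measureReal_def]
  refine Real.rpow_left_injOn hq.ne' (lp.norm_nonneg' _) ENNReal.toReal_nonneg ?_
  dsimp only
  rw [toReal_eLpNorm_rpow hp0 hp, hlint, ENNReal.toReal_sum (ENNReal.sum_ne_top.1 (hlint ▸ hfin)),
    hΦ, ← Finset.sum_coe_sort S.range]
  exact Finset.sum_congr rfl fun v _ => hterm v

theorem Lp.simpleFunc.exists_lp_nat_norm_sub_eq {ι : Type*} [Finite ι] {μ : Measure α}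
    {p : ℝ≥0∞} [Fact (1 ≤ p)] (hp : p ≠ ∞) (s : ι → Lp.simpleFunc ℝ p μ) :
    ∃ y : ι → lp (fun _ : ℕ => ℝ) p, ∀ i j, ‖y i - y j‖ = ‖(s i : Lp ℝ p μ) - s j‖ := by
  obtain ⟨y, hy⟩ := SimpleFunc.exists_lp_nat_norm_sub_eq_eLpNorm_sub
    (zero_lt_one.trans_le Fact.out).ne' hp (fun i => toSimpleFunc (s i))
    fun i => simpleFunc.memLp (s i)
  refine ⟨y, fun i j => ?_⟩
  rw [hy, ← AddSubgroup.coe_sub]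
  exact (congrArg ENNReal.toReal (eLpNorm_congr_ae (sub_toSimpleFunc (s i) (s j)).symm)).trans
    (norm_toSimpleFunc (s i - s j)).symm

end MeasureTheory

theorem Lr_finitely_lipschitz_embeds_ellr (r : ℝ) (hr : 1 ≤ r) :
    ∃ A : ℝ, 0 < A ∧ ∀ F : Finset (LSp r), ∃ T : LSp r → ellSp r,
      ∀ f ∈ F, ∀ g ∈ F,
        (1/A) * ‖f - g‖ ≤ ‖T f - T g‖ ∧ ‖T f - T g‖ ≤ A * ‖f - g‖ := by
  classical
  have : Fact (1 ≤ ENNReal.ofReal r) := ⟨ENNReal.one_le_ofReal.2 hr⟩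
  refine ⟨2, two_pos, fun F => ?_⟩
  obtain ⟨δ, hδ, hsep⟩ := F.exists_pos_le_dist_of_ne
  choose s hs using fun f : LSp r =>
    (Lp.simpleFunc.denseRange ENNReal.ofReal_ne_top).exists_dist_lt f (by positivity : 0 < δ / 4)
  obtain ⟨y, hy⟩ := Lp.simpleFunc.exists_lp_nat_norm_sub_eq ENNReal.ofReal_ne_top
    fun f : F => s f
  refine ⟨fun f => if hf : f ∈ F then y ⟨f, hf⟩ else 0, fun f hf g hg => ?_⟩
  simp only [dif_pos hf, dif_pos hg, hy]
  by_cases hfg : f = g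
  · simp [hfg]
  -- the approximation moves distances by less than `δ / 2 ≤ ‖f - g‖ / 2`
  have hclose := dist_dist_dist_le f g (s f) (s g)
  rw [Real.dist_eq, abs_le] at hclose
  simp only [dist_eq_norm] at hclose hs hsep
  constructor <;> linarith [hs f, hs g, hsep f hf g hg hfg]
end
end
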